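/- arXiv:1307.1043 — 5 statements merged into one kernel-verified Lean document; each statement's English description precedes it below -/
import Mathlib

section
/- Let I = [a,b] be a compact interval, ψ : I × U → ℝ a continuous family of C^2 functionals, and set f(λ,h) := ∇ψ_λ(h); assume f(λ,0) = 0 for all λ ∈ I. Let H = X ⊕ Y be an orthogonal splitting with dim X < ∞, write h = (x,y) and f(λ,h) = (f_1(λ,x,y), f_2(λ,x,y)) for the components of f along X and Y, and assume that the partial differential D_y f_2(λ,0,0) : Y → Y is invertible for every λ ∈ I. Then there exist δ > 0, the open ball B := {x ∈ X : ‖x‖ < δ}, and a continuous map g : I × B → Y such that (x, g(λ,x)) ∈ U and f_2(λ, x, g(λ,x)) = 0 for all (λ,x) ∈ I × B, g(λ,0) = 0 for all λ ∈ I, each g_λ := g(λ,·) is C^1 on B, and the map (λ,x) ↦ D g_λ(x) is continuous on I × B. -/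
/-!
Since `ψ` is only continuous in `λ`, the implicit function theorem cannot treat `λ` as one more
variable. Instead, with `A_λ := D_y f₂(λ,0,0)`, the Newton-type map
`y ↦ y - A_λ⁻¹ f₂(λ,x,y)` has derivative `1 - A_λ⁻¹ D_y f₂(λ,x,y)` in `y`, which vanishes at
the origin. By compactness of `[a,b]` (the tube lemma) it is at most `1/2` on a ball whose radius
does not depend on `λ`, so for all small `x` the Newton maps contract one fixed closed ball, and
their fixed points depend continuously on `(λ,x)`. A continuous solution `g` of `F(x, g x) = 0`
with `D_y F` invertible is automatically differentiable, with derivative `-(D_y F)⁻¹ D_x F`, which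
is continuous in `(λ,x)` because inversion of operators is continuous.
-/

open Set Metric

section

open Filter Topology Function ContinuousLinearMap
open scoped Ring

theorem IsCompact.eventually_forall_mem_of_continuousOn {Λ P Z : Type*} [TopologicalSpace Λ]
    [TopologicalSpace P] [TopologicalSpace Z] {K : Set Λ} (hK : IsCompact K) {W : Set P}
    {p₀ : P} (hW : W ∈ 𝓝 p₀) {φ : Λ × P → Z} (hφ : ContinuousOn φ (K ×ˢ W)) {V : Set Z}
    (hV : IsOpen V) (h₀ : ∀ l ∈ K, φ (l, p₀) ∈ V) :
    ∀ᶠ p in 𝓝 p₀, ∀ l ∈ K, φ (l, p) ∈ V := by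
  suffices ∀ᶠ p in 𝓝 p₀, ∀ l ∈ K, l ∈ K → φ (l, p) ∈ V from
    this.mono fun p hp l hl => hp l hl hl
  refine hK.eventually_forall_of_forall_eventually fun l hl => ?_
  have hφV := (hφ _ ⟨hl, mem_of_mem_nhds hW⟩).preimage_mem_nhdsWithin (hV.mem_nhds (h₀ l hl))
  rw [mem_nhdsWithin_iff_eventually] at hφV
  have hWz : ∀ᶠ z : P × Λ in 𝓝 (p₀, l), z.1 ∈ W := continuous_fst.continuousAt.eventually_mem hW
  filter_upwards [continuous_swap.continuousAt.eventually hφV, hWz] with z hz hzW hzK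
  exact hz ⟨hzK, hzW⟩

theorem LipschitzOnWith.dist_le_of_isFixedPt {α : Type*} [PseudoMetricSpace α] {K : NNReal}
    {f : α → α} {s : Set α} (hf : LipschitzOnWith K f s) {x y : α} (hx : x ∈ s) (hy : y ∈ s)
    (hfy : IsFixedPt f y) : (1 - K) * dist x y ≤ dist x (f x) := by
  have hlip := hf.dist_le_mul x hx y hy
  rw [hfy.eq] at hlip
  linarith [dist_triangle x (f x) y]

theorem LipschitzOnWith.eq_of_isFixedPt {α : Type*} [MetricSpace α] {K : NNReal} {f : α → α}
    {s : Set α} (hf : LipschitzOnWith K f s) (hK : K < 1) {x y : α} (hx : x ∈ s) (hy : y ∈ s)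
    (hfx : IsFixedPt f x) (hfy : IsFixedPt f y) : x = y := by
  have h := hf.dist_le_of_isFixedPt hx hy hfy
  rw [hfx.eq, dist_self] at h
  have hK' : (0 : ℝ) < 1 - K := sub_pos.2 (by exact_mod_cast hK)
  exact dist_le_zero.1 (nonpos_of_mul_nonpos_right h hK')

/-- The uniform contraction principle. -/
theorem exists_continuousOn_isFixedPt_of_lipschitzOnWith {Q α : Type*} [TopologicalSpace Q]
    [MetricSpace α] {D : Set Q} {s : Set α} (hs : IsComplete s) (hne : s.Nonempty)
    {K : NNReal} (hK : K < 1) {Φ : Q → α → α} (hmaps : ∀ q ∈ D, MapsTo (Φ q) s s)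
    (hlip : ∀ q ∈ D, LipschitzOnWith K (Φ q) s)
    (hcont : ∀ y ∈ s, ContinuousOn (fun q => Φ q y) D) :
    ∃ g : Q → α, (∀ q ∈ D, g q ∈ s ∧ IsFixedPt (Φ q) (g q)) ∧ ContinuousOn g D := by
  obtain ⟨y, hy⟩ := hne
  have : Nonempty α := ⟨y⟩
  have hfix : ∀ q ∈ D, ∃ z ∈ s, IsFixedPt (Φ q) z := fun q hq =>
    let ⟨z, hzs, hz, _⟩ := ContractingWith.exists_fixedPoint' hs (hmaps q hq)
      ⟨hK, (hlip q hq).mapsToRestrict (hmaps q hq)⟩ hy (edist_ne_top _ _)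
    ⟨z, hzs, hz⟩
  choose! g hgs hgfix using hfix
  refine ⟨g, fun q hq => ⟨hgs q hq, hgfix q hq⟩, fun q₀ hq₀ => ?_⟩
  have hK' : (0 : ℝ) < 1 - K := sub_pos.2 (by exact_mod_cast hK)
  have hlim : Tendsto (fun q => dist (g q₀) (Φ q (g q₀)) / (1 - K)) (𝓝[D] q₀) (𝓝 0) := by
    have := ((hcont _ (hgs q₀ hq₀)) q₀ hq₀).tendsto.dist (tendsto_const_nhds (x := g q₀))
    simpa [(hgfix q₀ hq₀).eq, dist_comm] using this.div_const (1 - (K : ℝ))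
  rw [ContinuousWithinAt, tendsto_iff_dist_tendsto_zero]
  refine squeeze_zero' (Eventually.of_forall fun _ => dist_nonneg) ?_ hlim
  filter_upwards [self_mem_nhdsWithin] with q hq
  rw [le_div_iff₀' hK', dist_comm]
  exact (hlip q hq).dist_le_of_isFixedPt (hgs q₀ hq₀) (hgs q hq) (hgfix q hq)

theorem ContinuousOn.comp_prodMap_id {Λ P Q Z : Type*} [TopologicalSpace Λ] [TopologicalSpace P]
    [TopologicalSpace Q] [TopologicalSpace Z] {K : Set Λ} {U : Set P} {φ : Λ × P → Z}
    (hφ : ContinuousOn φ (K ×ˢ U)) {e : Q → P} (he : Continuous e) :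
    ContinuousOn (fun q : Λ × Q => φ (q.1, e q.2)) (K ×ˢ (e ⁻¹' U)) :=
  hφ.comp (continuous_fst.prodMk (he.comp continuous_snd)).continuousOn fun _ hq => hq

section NormedRing

variable {R : Type*} [NormedRing R] [HasSummableGeomSeries R]

theorem ContinuousOn.ringInverse {X : Type*} [TopologicalSpace X] {φ : X → R} {s : Set X}
    (hφ : ContinuousOn φ s) (hu : ∀ x ∈ s, IsUnit (φ x)) :
    ContinuousOn (fun x => (φ x)⁻¹ʳ) s := fun x hx => by
  obtain ⟨u, hu⟩ := hu x hx
  exact (hu ▸ NormedRing.inverse_continuousAt u).comp_continuousWithinAt (hφ x hx)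

theorem isUnit_of_norm_one_sub_inverse_mul_lt_one {a b : R} (ha : IsUnit a)
    (h : ‖1 - a⁻¹ʳ * b‖ < 1) : IsUnit b := by
  have hab : IsUnit (a⁻¹ʳ * b) := sub_sub_cancel 1 (a⁻¹ʳ * b) ▸ isUnit_one_sub_of_norm_lt_one h
  rw [← one_mul b, ← Ring.mul_inverse_cancel a ha, mul_assoc]
  exact ha.mul hab

end NormedRing

variable {E F : Type*} [NormedAddCommGroup E] [NormedSpace ℝ E]
  [NormedAddCommGroup F] [NormedSpace ℝ F]

theorem mapsTo_closedBall_and_lipschitzOnWith_sub_comp {φ : F → F} {φ' : F → F →L[ℝ] F}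
    (L : F →L[ℝ] F) {ε : ℝ} (hφ : ∀ y ∈ closedBall (0 : F) ε, HasFDerivAt φ (φ' y) y)
    (hφ' : ∀ y ∈ closedBall (0 : F) ε, ‖1 - L * φ' y‖ ≤ 1 / 2) (h₀ : ‖L (φ 0)‖ ≤ ε / 2) :
    MapsTo (fun y => y - L (φ y)) (closedBall 0 ε) (closedBall 0 ε) ∧
      LipschitzOnWith (1 / 2) (fun y => y - L (φ y)) (closedBall 0 ε) := by
  have hlip : LipschitzOnWith (1 / 2) (fun y => y - L (φ y)) (closedBall 0 ε) :=
    (convex_closedBall 0 ε).lipschitzOnWith_of_nnnorm_hasFDerivWithin_le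
      (fun y hy => ((hasFDerivAt_id y).sub (L.hasFDerivAt.comp y (hφ y hy))).hasFDerivWithinAt)
      fun y hy => by rw [← NNReal.coe_le_coe, coe_nnnorm]; exact_mod_cast hφ' y hy
  refine ⟨fun y hy => ?_, hlip⟩
  have h0 : (0 : F) ∈ closedBall 0 ε := mem_closedBall_self (by linarith [norm_nonneg (L (φ 0))])
  have hy0 := hlip.dist_le_mul y hy 0 h0
  rw [mem_closedBall_zero_iff] at hy ⊢
  rw [dist_eq_norm, dist_zero_right, zero_sub] at hy0
  push_cast at hy0
  calc ‖y - L (φ y)‖ ≤ ‖-L (φ 0)‖ + ‖y - L (φ y) - -L (φ 0)‖ := norm_le_norm_add_norm_sub' _ _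
    _ ≤ ε := by rw [norm_neg]; linarith

theorem apply_eq_zero_of_isFixedPt_sub_comp {φ : F → F} {L : F →L[ℝ] F} (hL : IsUnit L) {y : F}
    (hy : IsFixedPt (fun y => y - L (φ y)) y) : φ y = 0 := by
  obtain ⟨u, rfl⟩ := hL
  calc φ y = (↑u⁻¹ * ↑u : F →L[ℝ] F) (φ y) := by rw [u.inv_mul, one_apply_eq_self]
    _ = (↑u⁻¹ : F →L[ℝ] F) ((u : F →L[ℝ] F) (φ y)) := rfl
    _ = 0 := by rw [sub_eq_self.1 hy, map_zero]

noncomputable def implicitFDeriv (f' : E × F →L[ℝ] F) : E →L[ℝ] F :=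
  -(f'.comp (inr ℝ E F))⁻¹ʳ.comp (f'.comp (inl ℝ E F))

theorem ContinuousOn.implicitFDeriv [CompleteSpace F] {X : Type*} [TopologicalSpace X]
    {φ : X → E × F →L[ℝ] F} {s : Set X} (hφ : ContinuousOn φ s)
    (hu : ∀ x ∈ s, IsUnit ((φ x).comp (inr ℝ E F))) :
    ContinuousOn (fun x => implicitFDeriv (φ x)) s :=
  ((hφ.clm_comp continuousOn_const).ringInverse hu).clm_comp
    (hφ.clm_comp continuousOn_const) |>.neg

theorem HasFDerivAt.hasFDerivAt_implicit {f : E × F → F} {f' : E × F →L[ℝ] F}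
    {g : E → F} {x : E} (hf : HasFDerivAt f f' (x, g x)) (hg : ContinuousAt g x)
    (hfg : ∀ᶠ x' in 𝓝 x, f (x', g x') = f (x, g x)) (hf' : IsUnit (f'.comp (inr ℝ E F))) :
    HasFDerivAt g (implicitFDeriv f') x := by
  set T := implicitFDeriv f'
  set u : E → E × F := fun x' => (x' - x, g x' - g x)
  set R : E → F := fun x' => g x' - g x - T (x' - x)
  have hR : ∀ x', R x' = (f'.comp (inr ℝ E F))⁻¹ʳ (f' (u x')) := by
    intro x'
    have hsplit : u x' = inl ℝ E F (x' - x) + inr ℝ E F (g x' - g x) := by simp [u]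
    have hinv : (f'.comp (inr ℝ E F))⁻¹ʳ (f' (inr ℝ E F (g x' - g x))) = g x' - g x :=
      show ((f'.comp (inr ℝ E F))⁻¹ʳ * f'.comp (inr ℝ E F)) _ = _ by
        rw [Ring.inverse_mul_cancel _ hf', one_apply_eq_self]
    rw [hsplit, map_add, map_add, hinv]
    simp only [R, T, implicitFDeriv, neg_apply, ContinuousLinearMap.comp_apply]
    abel
  have hfu : (fun x' => f' (u x')) =o[𝓝 x] u := by
    have hφ : Tendsto (fun x' => (x', g x')) (𝓝 x) (𝓝 (x, g x)) := continuousAt_id.prodMk hg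
    refine (hf.isLittleO.comp_tendsto hφ).neg_left.congr' ?_ .rfl
    filter_upwards [hfg] with x' hx'
    simp only [Function.comp_apply, hx', sub_self, zero_sub, neg_neg]
    rfl
  have hRu : R =o[𝓝 x] u := by
    simp_rw [funext hR]
    exact ((f'.comp (inr ℝ E F))⁻¹ʳ.isBigO_comp _ _).trans_isLittleO hfu
  -- `u x' = (x' - x, T (x' - x)) + (0, R x')`, and the second summand is negligible
  have hux : u =O[𝓝 x] fun x' => x' - x := by
    have hdecomp : (fun x' => u x' - inr ℝ E F (R x')) =
        fun x' => ((ContinuousLinearMap.id ℝ E).prod T) (x' - x) := by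
      funext x'
      simp [u, R]
    refine (((inr ℝ E F).isBigO_comp R (𝓝 x)).trans_isLittleO hRu).right_isBigO_sub.trans ?_
    rw [hdecomp]
    exact ((ContinuousLinearMap.id ℝ E).prod T).isBigO_comp _ _
  exact HasFDerivAt.of_isLittleO (hRu.trans_isBigO hux)

theorem isUnit_comp_inr_of_hasFDerivAt [CompleteSpace F] {φ : E × F → F} {φ' : E × F →L[ℝ] F}
    (hφ : HasFDerivAt φ φ' 0) {D : F →L[ℝ] F} (hD : Bijective D)
    (hD' : HasFDerivAt (fun y => φ (0, y)) D 0) : IsUnit (φ'.comp (inr ℝ E F)) := by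
  rw [← hD'.unique (hφ.comp 0 (hasFDerivAt_prodMk_right 0 0))]
  exact isUnit_iff_bijective.2 hD

section ImplicitFamily

variable [CompleteSpace F] {Λ : Type*} [TopologicalSpace Λ] {K : Set Λ} {W : Set (E × F)}
  {f : Λ → E × F → F} {f' : Λ → E × F → E × F →L[ℝ] F}

theorem continuousOn_inverse_comp_inr_zero (hW : W ∈ 𝓝 0)
    (hf'c : ContinuousOn (fun q : Λ × (E × F) => f' q.1 q.2) (K ×ˢ W))
    (hunit : ∀ l ∈ K, IsUnit ((f' l 0).comp (inr ℝ E F))) :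
    ContinuousOn (fun l => ((f' l 0).comp (inr ℝ E F))⁻¹ʳ) K :=
  ((hf'c.comp (continuousOn_id.prodMk continuousOn_const) fun _ hl =>
    ⟨hl, mem_of_mem_nhds hW⟩).clm_comp continuousOn_const).ringInverse hunit

theorem eventually_norm_one_sub_inverse_mul_lt (hK : IsCompact K) (hW : W ∈ 𝓝 0)
    (hf'c : ContinuousOn (fun q : Λ × (E × F) => f' q.1 q.2) (K ×ˢ W))
    (hunit : ∀ l ∈ K, IsUnit ((f' l 0).comp (inr ℝ E F))) :
    ∀ᶠ p in 𝓝 (0 : E × F), p ∈ W ∧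
      ∀ l ∈ K, ‖1 - ((f' l 0).comp (inr ℝ E F))⁻¹ʳ * (f' l p).comp (inr ℝ E F)‖ < 1 / 2 := by
  have hc : ContinuousOn (fun q : Λ × (E × F) =>
      1 - ((f' q.1 0).comp (inr ℝ E F))⁻¹ʳ * (f' q.1 q.2).comp (inr ℝ E F)) (K ×ˢ W) :=
    continuousOn_const.sub (((continuousOn_inverse_comp_inr_zero hW hf'c hunit).comp
      continuousOn_fst fun q hq => hq.1).mul (hf'c.clm_comp continuousOn_const))
  refine (show ∀ᶠ p in 𝓝 0, p ∈ W from hW).and ?_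
  refine (hK.eventually_forall_mem_of_continuousOn hW hc isOpen_ball (V := ball 0 (1 / 2))
    fun l hl => ?_).mono fun p hp l hl => mem_ball_zero_iff.1 (hp l hl)
  rw [Ring.inverse_mul_cancel _ (hunit l hl), sub_self]
  exact mem_ball_self one_half_pos

theorem eventually_norm_inverse_apply_lt (hK : IsCompact K) (hW : W ∈ 𝓝 0)
    (hfc : ContinuousOn (fun q : Λ × (E × F) => f q.1 q.2) (K ×ˢ W))
    (hf'c : ContinuousOn (fun q : Λ × (E × F) => f' q.1 q.2) (K ×ˢ W))
    (hf0 : ∀ l ∈ K, f l 0 = 0) (hunit : ∀ l ∈ K, IsUnit ((f' l 0).comp (inr ℝ E F)))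
    {η : ℝ} (hη : 0 < η) :
    ∀ᶠ x in 𝓝 (0 : E), ∀ l ∈ K, ‖((f' l 0).comp (inr ℝ E F))⁻¹ʳ (f l (x, 0))‖ < η := by
  have hW₀ : {x : E | (x, (0 : F)) ∈ W} ∈ 𝓝 0 :=
    (continuous_id.prodMk continuous_const).continuousAt.preimage_mem_nhds hW
  have hc : ContinuousOn (fun q : Λ × E => ((f' q.1 0).comp (inr ℝ E F))⁻¹ʳ (f q.1 (q.2, 0)))
      (K ×ˢ {x : E | (x, (0 : F)) ∈ W}) :=
    ((continuousOn_inverse_comp_inr_zero hW hf'c hunit).comp continuousOn_fst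
      fun q hq => hq.1).clm_apply
      (hfc.comp (continuousOn_fst.prodMk (continuousOn_snd.prodMk continuousOn_const))
        fun q hq => ⟨hq.1, hq.2⟩)
  refine (hK.eventually_forall_mem_of_continuousOn hW₀ hc isOpen_ball (V := ball 0 η)
    fun l hl => ?_).mono fun x hx l hl => mem_ball_zero_iff.1 (hx l hl)
  show ((f' l 0).comp (inr ℝ E F))⁻¹ʳ (f l 0) ∈ ball 0 η
  rw [hf0 l hl, map_zero]
  exact mem_ball_self hη

theorem exists_continuousOn_implicit (hK : IsCompact K) (hW : W ∈ 𝓝 0)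
    (hf' : ∀ l ∈ K, ∀ p ∈ W, HasFDerivAt (f l) (f' l p) p)
    (hfc : ContinuousOn (fun q : Λ × (E × F) => f q.1 q.2) (K ×ˢ W))
    (hf'c : ContinuousOn (fun q : Λ × (E × F) => f' q.1 q.2) (K ×ˢ W))
    (hf0 : ∀ l ∈ K, f l 0 = 0) (hunit : ∀ l ∈ K, IsUnit ((f' l 0).comp (inr ℝ E F))) :
    ∃ δ > 0, ∃ g : Λ → E → F, ContinuousOn (fun q : Λ × E => g q.1 q.2) (K ×ˢ ball 0 δ) ∧
      (∀ l ∈ K, g l 0 = 0) ∧ ∀ l ∈ K, ∀ x ∈ ball 0 δ, (x, g l x) ∈ W ∧ f l (x, g l x) = 0 ∧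
        IsUnit ((f' l (x, g l x)).comp (inr ℝ E F)) := by
  set A : Λ → F →L[ℝ] F := fun l => (f' l 0).comp (inr ℝ E F)
  obtain ⟨r, hr, hrW⟩ :=
    eventually_nhds_iff_ball.1 (eventually_norm_one_sub_inverse_mul_lt hK hW hf'c hunit)
  set ε := r / 2
  have hε : 0 < ε := half_pos hr
  obtain ⟨δ, hδ, hδs⟩ := eventually_nhds_iff_ball.1
    ((show ∀ᶠ x in 𝓝 (0 : E), x ∈ ball 0 ε from ball_mem_nhds 0 hε).and
    (eventually_norm_inverse_apply_lt hK hW hfc hf'c hf0 hunit (half_pos hε)))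
  have hmem : ∀ x ∈ ball (0 : E) δ, ∀ y ∈ closedBall (0 : F) ε, (x, y) ∈ ball (0 : E × F) r := by
    intro x hx y hy
    rw [mem_ball_zero_iff, Prod.norm_def]
    exact max_lt ((mem_ball_zero_iff.1 (hδs x hx).1).trans (half_lt_self hr))
      ((mem_closedBall_zero_iff.1 hy).trans_lt (half_lt_self hr))
  set Φ : Λ × E → F → F := fun q y => y - (A q.1)⁻¹ʳ (f q.1 (q.2, y))
  have hΦ : ∀ q ∈ K ×ˢ ball (0 : E) δ, MapsTo (Φ q) (closedBall 0 ε) (closedBall 0 ε) ∧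
      LipschitzOnWith (1 / 2) (Φ q) (closedBall 0 ε) := by
    rintro ⟨l, x⟩ ⟨hl, hx⟩
    exact mapsTo_closedBall_and_lipschitzOnWith_sub_comp _
      (fun y hy => (hf' l hl _ (hrW _ (hmem x hx y hy)).1).comp y (hasFDerivAt_prodMk_right x y))
      (fun y hy => ((hrW _ (hmem x hx y hy)).2 l hl).le) ((hδs x hx).2 l hl).le
  have hcont : ∀ y ∈ closedBall (0 : F) ε, ContinuousOn (fun q => Φ q y) (K ×ˢ ball 0 δ) :=
    fun y hy => continuousOn_const.sub (((continuousOn_inverse_comp_inr_zero hW hf'c hunit).comp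
      continuousOn_fst fun q hq => hq.1).clm_apply
      (hfc.comp (continuousOn_fst.prodMk (continuousOn_snd.prodMk continuousOn_const))
        fun q hq => ⟨hq.1, (hrW _ (hmem _ hq.2 y hy)).1⟩))
  obtain ⟨g, hg, hgc⟩ := exists_continuousOn_isFixedPt_of_lipschitzOnWith
    isClosed_closedBall.isComplete (nonempty_closedBall.2 hε.le) (by norm_num)
    (fun q hq => (hΦ q hq).1) (fun q hq => (hΦ q hq).2) hcont
  refine ⟨δ, hδ, fun l x => g (l, x), hgc, fun l hl => ?_, fun l hl x hx => ?_⟩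
  · have hq : (l, (0 : E)) ∈ K ×ˢ ball (0 : E) δ := ⟨hl, mem_ball_self hδ⟩
    have hfix0 : IsFixedPt (Φ (l, 0)) 0 := by simp [IsFixedPt, Φ, Prod.mk_zero_zero, hf0 l hl]
    exact (hΦ _ hq).2.eq_of_isFixedPt (by norm_num) (hg _ hq).1 (mem_closedBall_self hε.le)
      (hg _ hq).2 hfix0
  · obtain ⟨hgs, hgfix⟩ := hg (l, x) ⟨hl, hx⟩
    have hp := hrW _ (hmem x hx _ hgs)
    exact ⟨hp.1, apply_eq_zero_of_isFixedPt_sub_comp (hunit l hl).ringInverse hgfix,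
      isUnit_of_norm_one_sub_inverse_mul_lt_one (hunit l hl) ((hp.2 l hl).trans one_half_lt_one)⟩

theorem contDiffOn_and_continuousOn_fderiv_of_implicit
    (hf' : ∀ l ∈ K, ∀ p ∈ W, HasFDerivAt (f l) (f' l p) p)
    (hf'c : ContinuousOn (fun q : Λ × (E × F) => f' q.1 q.2) (K ×ˢ W))
    {B : Set E} (hB : IsOpen B) {g : Λ → E → F}
    (hgc : ContinuousOn (fun q : Λ × E => g q.1 q.2) (K ×ˢ B))
    (hg : ∀ l ∈ K, ∀ x ∈ B, (x, g l x) ∈ W ∧ f l (x, g l x) = 0 ∧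
      IsUnit ((f' l (x, g l x)).comp (inr ℝ E F))) :
    (∀ l ∈ K, ContDiffOn ℝ 1 (g l) B) ∧
      ContinuousOn (fun q : Λ × E => fderiv ℝ (g q.1) q.2) (K ×ˢ B) := by
  have hslice : ∀ l ∈ K, ContinuousOn (g l) B := fun l hl =>
    hgc.comp (continuousOn_const.prodMk continuousOn_id) fun x hx => ⟨hl, hx⟩
  have hderiv : ∀ l ∈ K, ∀ x ∈ B, HasFDerivAt (g l) (implicitFDeriv (f' l (x, g l x))) x := by
    intro l hl x hx
    obtain ⟨hW, hzero, hunit⟩ := hg l hl x hx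
    refine (hf' l hl _ hW).hasFDerivAt_implicit ((hslice l hl).continuousAt (hB.mem_nhds hx)) ?_ hunit
    filter_upwards [hB.mem_nhds hx] with x' hx'
    rw [(hg l hl x' hx').2.1, hzero]
  have hcont : ContinuousOn (fun q : Λ × E => implicitFDeriv (f' q.1 (q.2, g q.1 q.2))) (K ×ˢ B) :=
    ContinuousOn.implicitFDeriv
      (hf'c.comp (continuousOn_fst.prodMk (continuousOn_snd.prodMk hgc))
        fun q hq => ⟨hq.1, (hg _ hq.1 _ hq.2).1⟩)
      fun q hq => (hg _ hq.1 _ hq.2).2.2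
  have hfderiv : EqOn (fun q : Λ × E => fderiv ℝ (g q.1) q.2)
      (fun q => implicitFDeriv (f' q.1 (q.2, g q.1 q.2))) (K ×ˢ B) :=
    fun q hq => (hderiv _ hq.1 _ hq.2).fderiv
  refine ⟨fun l hl => ?_, hcont.congr hfderiv⟩
  have h1 : (1 : WithTop ℕ∞) = 0 + 1 := by norm_num
  rw [h1, contDiffOn_succ_iff_hasFDerivWithinAt_of_uniqueDiffOn hB.uniqueDiffOn]
  refine ⟨by simp, fun x => implicitFDeriv (f' l (x, g l x)), ?_,
    fun x hx => (hderiv l hl x hx).hasFDerivWithinAt⟩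
  exact contDiffOn_zero.2 <| hcont.comp (f := fun x : E => (l, x))
    (continuousOn_const.prodMk continuousOn_id) fun x hx => ⟨hl, hx⟩

theorem exists_implicit_family (hK : IsCompact K) (hW : W ∈ 𝓝 0)
    (hf' : ∀ l ∈ K, ∀ p ∈ W, HasFDerivAt (f l) (f' l p) p)
    (hfc : ContinuousOn (fun q : Λ × (E × F) => f q.1 q.2) (K ×ˢ W))
    (hf'c : ContinuousOn (fun q : Λ × (E × F) => f' q.1 q.2) (K ×ˢ W))
    (hf0 : ∀ l ∈ K, f l 0 = 0) (hunit : ∀ l ∈ K, IsUnit ((f' l 0).comp (inr ℝ E F))) :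
    ∃ δ > 0, ∃ g : Λ → E → F,
      ContinuousOn (fun q : Λ × E => g q.1 q.2) (K ×ˢ ball 0 δ) ∧ (∀ l ∈ K, g l 0 = 0) ∧
      (∀ l ∈ K, ∀ x ∈ ball 0 δ, (x, g l x) ∈ W ∧ f l (x, g l x) = 0) ∧
      (∀ l ∈ K, ContDiffOn ℝ 1 (g l) (ball 0 δ)) ∧
      ContinuousOn (fun q : Λ × E => fderiv ℝ (g q.1) q.2) (K ×ˢ ball 0 δ) := by
  obtain ⟨δ, hδ, g, hgc, hg0, hg⟩ := exists_continuousOn_implicit hK hW hf' hfc hf'c hf0 hunit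
  exact ⟨δ, hδ, g, hgc, hg0, fun l hl x hx => ⟨(hg l hl x hx).1, (hg l hl x hx).2.1⟩,
    contDiffOn_and_continuousOn_fderiv_of_implicit hf' hf'c isOpen_ball hgc hg⟩

end ImplicitFamily

theorem hasFDerivAt_clm_fderiv_comp {H G : Type*} [NormedAddCommGroup H] [NormedSpace ℝ H]
    [NormedAddCommGroup G] [NormedSpace ℝ G] (L : StrongDual ℝ H →L[ℝ] G) (e : E →L[ℝ] H)
    {ψ : H → ℝ} {U : Set H} (hU : IsOpen U) (hψ : ContDiffOn ℝ 2 ψ U) {p : E} (hp : e p ∈ U) :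
    HasFDerivAt (fun p => L (fderiv ℝ ψ (e p))) (L ∘L fderiv ℝ (fderiv ℝ ψ) (e p) ∘L e) p := by
  have hdiff : DifferentiableAt ℝ (fderiv ℝ ψ) (e p) :=
    ((hψ.fderiv_of_isOpen hU (by norm_num : (1 : WithTop ℕ∞) + 1 ≤ 2)).differentiableOn
      one_ne_zero).differentiableAt (hU.mem_nhds hp)
  exact L.hasFDerivAt.comp p (hdiff.hasFDerivAt.comp p e.hasFDerivAt)

theorem ContinuousOn.clm_comp_comp_clm {X M N P : Type*} [TopologicalSpace X]
    [NormedAddCommGroup M] [NormedSpace ℝ M] [NormedAddCommGroup N] [NormedSpace ℝ N]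
    [NormedAddCommGroup P] [NormedSpace ℝ P] {s : Set X} {φ : X → M →L[ℝ] N}
    (hφ : ContinuousOn φ s) (L : N →L[ℝ] P) (e : E →L[ℝ] M) :
    ContinuousOn (fun x => L ∘L φ x ∘L e) s :=
  (continuousOn_const.clm_comp hφ).clm_comp continuousOn_const

end

theorem lyapunov_schmidt_existence_general
    {H : Type*} [NormedAddCommGroup H] [InnerProductSpace ℝ H] [CompleteSpace H]
    (U : Set H) (hUopen : IsOpen U) (hU0 : (0 : H) ∈ U)
    (a b : ℝ)
    (ψ : ℝ → H → ℝ)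
    -- `ψ` is a continuous family of `C²` functionals parametrized by `I = [a,b]`:
    (hψC2 : ∀ l ∈ Icc a b, ContDiffOn ℝ 2 (ψ l) U)
    (hψd1 : ContinuousOn (fun p : ℝ × H => fderiv ℝ (ψ p.1) p.2) (Icc a b ×ˢ U))
    (hψd2 : ContinuousOn (fun p : ℝ × H => fderiv ℝ (fderiv ℝ (ψ p.1)) p.2) (Icc a b ×ˢ U))
    -- `f(λ, 0) = 0` for all `λ ∈ I`, where `f(λ,h) := ∇ψ_λ(h)`:
    (hcrit : ∀ l ∈ Icc a b, gradient (ψ l) 0 = 0)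
    -- orthogonal splitting `H = X ⊕ Y` with `Y = Xᗮ` and `dim X < ∞`:
    (X : Submodule ℝ H)
    -- `D_y f₂(λ,0,0) : Y → Y` is invertible for every `λ ∈ I`, where
    -- `f₂(λ,x,y)` is the `Y`-component of `f(λ, x + y)`:
    (hD : ∀ l ∈ Icc a b, ∃ D : Xᗮ →L[ℝ] Xᗮ, Function.Bijective D ∧
      HasFDerivAt (fun y : Xᗮ => Submodule.orthogonalProjection Xᗮ (gradient (ψ l) (y : H))) D 0) :
    ∃ δ > (0 : ℝ), ∃ g : ℝ → X → Xᗮ,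
      -- `g` is continuous on `I × B`:
      ContinuousOn (fun p : ℝ × X => g p.1 p.2) (Icc a b ×ˢ ball 0 δ) ∧
      -- `g(λ,0) = 0`:
      (∀ l ∈ Icc a b, g l 0 = 0) ∧
      -- `(x, g(λ,x)) ∈ U` and `f₂(λ, x, g(λ,x)) = 0` on `I × B`:
      (∀ l ∈ Icc a b, ∀ x ∈ ball (0 : X) δ,
        ((x : H) + (g l x : H)) ∈ U ∧
        Submodule.orthogonalProjection Xᗮ (gradient (ψ l) ((x : H) + (g l x : H))) = 0) ∧
      -- each `g_λ` is `C¹` on `B`: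
      (∀ l ∈ Icc a b, ContDiffOn ℝ 1 (g l) (ball 0 δ)) ∧
      -- `(λ,x) ↦ D g_λ(x)` is continuous on `I × B`:
      ContinuousOn (fun p : ℝ × X => fderiv ℝ (g p.1) p.2) (Icc a b ×ˢ ball 0 δ) := by
  set e : X × Xᗮ →L[ℝ] H := X.subtypeL.coprod Xᗮ.subtypeL
  -- `gradient = (toDual ℝ H).symm ∘ fderiv ℝ`, so `f₂(λ, x + y) = L (Dψ_λ (e (x, y)))`
  set L : StrongDual ℝ H →L[ℝ] Xᗮ := (Submodule.orthogonalProjectionOnto Xᗮ).comp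
    (InnerProductSpace.toDual ℝ H).symm.toContinuousLinearEquiv.toContinuousLinearMap
  have he0 : e 0 ∈ U := by rwa [map_zero]
  obtain ⟨δ, hδ, g, hgc, hg0, hg, hgC1, hg'c⟩ := exists_implicit_family
    (f := fun l p => L (fderiv ℝ (ψ l) (e p)))
    (f' := fun l p => L ∘L fderiv ℝ (fderiv ℝ (ψ l)) (e p) ∘L e) (isCompact_Icc (a := a) (b := b))
    (e.continuous.continuousAt.preimage_mem_nhds (hUopen.mem_nhds he0))
    (fun l hl _ hp => hasFDerivAt_clm_fderiv_comp L e hUopen (hψC2 l hl) hp)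
    (L.continuous.comp_continuousOn (hψd1.comp_prodMap_id e.continuous))
    ((hψd2.comp_prodMap_id e.continuous).clm_comp_comp_clm L e)
    (fun l hl => show Submodule.orthogonalProjectionOnto Xᗮ (gradient (ψ l) (e 0)) = 0 by
      rw [map_zero, hcrit l hl, map_zero])
    fun l hl => by
      obtain ⟨D, hDbij, hD'⟩ := hD l hl
      refine isUnit_comp_inr_of_hasFDerivAt
        (hasFDerivAt_clm_fderiv_comp L e hUopen (hψC2 l hl) he0) hDbij
        (hD'.congr_of_eventuallyEq (Filter.Eventually.of_forall fun y => ?_))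
      simp [e, L, gradient]
  exact ⟨δ, hδ, g, hgc, hg0, hg, hgC1, hg'c⟩

/-- **Lyapunov–Schmidt reduction, existence of the implicit map `g`.**
`ψ : I × U → ℝ` is a continuous family of `C²` functionals on a neighborhood `U` of `0` in a
separable real Hilbert space `H`, `f(λ,h) := ∇ψ_λ(h)` vanishes along the trivial branch,
`H = X ⊕ Xᗮ` is an orthogonal splitting with `dim X < ∞`, and the partial differential
`D_y f₂(λ,0,0) : Xᗮ → Xᗮ` is invertible for every `λ ∈ I`.  Then there are `δ > 0`,
the ball `B = B(0,δ) ⊆ X` and a continuous map `g : I × B → Xᗮ` with `g(λ,0) = 0`,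
`(x, g(λ,x)) ∈ U`, `f₂(λ, x, g(λ,x)) = 0`, each `g_λ` of class `C¹` on `B`, and
`(λ,x) ↦ D g_λ(x)` continuous on `I × B`. -/
theorem lyapunov_schmidt_existence
    {H : Type*} [NormedAddCommGroup H] [InnerProductSpace ℝ H] [CompleteSpace H]
    [TopologicalSpace.SeparableSpace H]
    (U : Set H) (hUopen : IsOpen U) (hU0 : (0 : H) ∈ U)
    (a b : ℝ) (hab : a ≤ b)
    (ψ : ℝ → H → ℝ)
    -- `ψ` is a continuous family of `C²` functionals parametrized by `I = [a,b]`: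
    (hψC2 : ∀ l ∈ Icc a b, ContDiffOn ℝ 2 (ψ l) U)
    (hψcont : ContinuousOn (fun p : ℝ × H => ψ p.1 p.2) (Icc a b ×ˢ U))
    (hψd1 : ContinuousOn (fun p : ℝ × H => fderiv ℝ (ψ p.1) p.2) (Icc a b ×ˢ U))
    (hψd2 : ContinuousOn (fun p : ℝ × H => fderiv ℝ (fderiv ℝ (ψ p.1)) p.2) (Icc a b ×ˢ U))
    -- `f(λ, 0) = 0` for all `λ ∈ I`, where `f(λ,h) := ∇ψ_λ(h)`:
    (hcrit : ∀ l ∈ Icc a b, gradient (ψ l) 0 = 0)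
    -- orthogonal splitting `H = X ⊕ Y` with `Y = Xᗮ` and `dim X < ∞`:
    (X : Submodule ℝ H) [FiniteDimensional ℝ X]
    -- `D_y f₂(λ,0,0) : Y → Y` is invertible for every `λ ∈ I`, where
    -- `f₂(λ,x,y)` is the `Y`-component of `f(λ, x + y)`:
    (hD : ∀ l ∈ Icc a b, ∃ D : Xᗮ →L[ℝ] Xᗮ, Function.Bijective D ∧
      HasFDerivAt (fun y : Xᗮ => Submodule.orthogonalProjection Xᗮ (gradient (ψ l) (y : H))) D 0) :
    ∃ δ > (0 : ℝ), ∃ g : ℝ → X → Xᗮ,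
      -- `g` is continuous on `I × B`:
      ContinuousOn (fun p : ℝ × X => g p.1 p.2) (Icc a b ×ˢ ball 0 δ) ∧
      -- `g(λ,0) = 0`:
      (∀ l ∈ Icc a b, g l 0 = 0) ∧
      -- `(x, g(λ,x)) ∈ U` and `f₂(λ, x, g(λ,x)) = 0` on `I × B`:
      (∀ l ∈ Icc a b, ∀ x ∈ ball (0 : X) δ,
        ((x : H) + (g l x : H)) ∈ U ∧
        Submodule.orthogonalProjection Xᗮ (gradient (ψ l) ((x : H) + (g l x : H))) = 0) ∧
      -- each `g_λ` is `C¹` on `B`: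
      (∀ l ∈ Icc a b, ContDiffOn ℝ 1 (g l) (ball 0 δ)) ∧
      -- `(λ,x) ↦ D g_λ(x)` is continuous on `I × B`:
      ContinuousOn (fun p : ℝ × X => fderiv ℝ (g p.1) p.2) (Icc a b ×ˢ ball 0 δ) :=
  lyapunov_schmidt_existence_general U hUopen hU0 a b ψ hψC2 hψd1 hψd2 hcrit X hD
end

section
/- Let I = [a,b] be a compact interval, ψ : I × U → ℝ a continuous family of C^2 functionals, and set f(λ,h) := ∇ψ_λ(h); assume f(λ,0) = 0 for all λ ∈ I. Let H = X ⊕ Y be an orthogonal splitting with dim X < ∞, write h = (x,y) and f(λ,h) = (f_1(λ,x,y), f_2(λ,x,y)), assume D_y f_2(λ,0,0) : Y → Y is invertible for every λ ∈ I, and let B ⊂ X and g : I × B → Y be as in the Lyapunov–Schmidt lemma, so that f_2(λ, x, g(λ,x)) = 0 on I × B. Define f̄(λ,x) := f_1(λ, x, g(λ,x)) and ψ̄(λ,x) := ψ(λ, x, g(λ,x)). Then ψ̄ : I × B → ℝ is a continuous family of C^2 functionals and ∇_x ψ̄(λ,x) = f̄(λ,x) for all (λ,x) ∈ I × B. -/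
/-!
Along the solution set `y = g(λ,x)` of `f₂ = 0` the derivative of `ψ_λ` vanishes on `Y`, so in
the chain rule for `ψ̄_λ(x) = ψ_λ(x + g(λ,x))` the term through `D g_λ` drops out and
`Dψ̄_λ(x)` is the restriction of `Dψ_λ(x + g(λ,x))` to `X`; its Riesz representative is the
`X`-component `f̄(λ,x)`. This formula is `C¹` in `x` and jointly continuous in `(λ,x)`;
differentiating it once more gives the second derivative and its joint continuity.
-/

open Set Metric Topology InnerProductSpace

section ChainRule

variable {𝕜 E F G : Type*} [NontriviallyNormedField 𝕜]
  [NormedAddCommGroup E] [NormedSpace 𝕜 E] [NormedAddCommGroup F] [NormedSpace 𝕜 F]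
  [NormedAddCommGroup G] [NormedSpace 𝕜 G]

theorem HasFDerivAt.comp_add_of_comp_eq_zero {ψ : F → G} {ψ' : F →L[𝕜] G}
    {ι : E →L[𝕜] F} {γ : E → F} {γ' : E →L[𝕜] F} {x : E}
    (hψ : HasFDerivAt ψ ψ' (ι x + γ x))
    (hγ : HasFDerivAt γ γ' x) (h : ψ'.comp γ' = 0) :
    HasFDerivAt (fun y => ψ (ι y + γ y)) (ψ'.comp ι) x := by
  have hcomp := hψ.comp x (ι.hasFDerivAt.add hγ)
  rwa [ContinuousLinearMap.comp_add, h, add_zero] at hcomp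

end ChainRule

section Gradient

variable {H : Type*} [NormedAddCommGroup H] [InnerProductSpace ℝ H] [CompleteSpace H]

theorem fderiv_apply_eq_zero_of_orthogonalProjectionOnto_gradient_eq_zero
    {K : Submodule ℝ H} [K.HasOrthogonalProjection] {f : H → ℝ} {z v : H}
    (h : K.orthogonalProjectionOnto (gradient f z) = 0) (hv : v ∈ K) : fderiv ℝ f z v = 0 := by
  rw [← inner_gradient_left]
  exact Submodule.inner_left_of_mem_orthogonal hv
    (Submodule.orthogonalProjectionOnto_eq_zero_iff.mp h)

theorem toDual_symm_comp_subtypeL (K : Submodule ℝ H) [CompleteSpace K] (A : H →L[ℝ] ℝ) :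
    (toDual ℝ K).symm (A.comp K.subtypeL)
      = K.orthogonalProjectionOnto ((toDual ℝ H).symm A) := by
  rw [LinearIsometryEquiv.symm_apply_eq]
  ext u
  rw [toDual_apply_apply, Submodule.inner_orthogonalProjectionOnto_eq_of_mem_right,
    toDual_symm_apply]
  rfl

end Gradient

section Reduced

variable {H : Type*} [NormedAddCommGroup H] [InnerProductSpace ℝ H] [CompleteSpace H]
  {X : Submodule ℝ H} {ψ : H → ℝ} {g : X → Xᗮ} {x : X}

theorem hasFDerivAt_reduced (hψ : DifferentiableAt ℝ ψ ((x : H) + g x))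
    (hg : DifferentiableAt ℝ g x)
    (hcrit : Xᗮ.orthogonalProjectionOnto (gradient ψ ((x : H) + g x)) = 0) :
    HasFDerivAt (fun x' : X => ψ ((x' : H) + g x'))
      ((fderiv ℝ ψ ((x : H) + g x)).comp X.subtypeL) x := by
  refine hψ.hasFDerivAt.comp_add_of_comp_eq_zero (ι := X.subtypeL)
    (Xᗮ.subtypeL.hasFDerivAt.comp x hg.hasFDerivAt) ?_
  ext v
  exact fderiv_apply_eq_zero_of_orthogonalProjectionOnto_gradient_eq_zero hcrit (fderiv ℝ g x v).2

variable {U : Set H} {s : Set X}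

theorem fderiv_reduced (hU : IsOpen U) (hψ : DifferentiableOn ℝ ψ U) (hs : IsOpen s)
    (hg : DifferentiableOn ℝ g s) (hmaps : MapsTo (fun x : X => (x : H) + g x) s U)
    (hcrit : ∀ x ∈ s, Xᗮ.orthogonalProjectionOnto (gradient ψ ((x : H) + g x)) = 0)
    (hx : x ∈ s) :
    fderiv ℝ (fun x' : X => ψ ((x' : H) + g x')) x
      = (fderiv ℝ ψ ((x : H) + g x)).comp X.subtypeL :=
  (hasFDerivAt_reduced (hψ.differentiableAt (hU.mem_nhds (hmaps hx)))
    (hg.differentiableAt (hs.mem_nhds hx)) (hcrit x hx)).fderiv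

theorem gradient_reduced [CompleteSpace X] (hU : IsOpen U) (hψ : DifferentiableOn ℝ ψ U)
    (hs : IsOpen s) (hg : DifferentiableOn ℝ g s)
    (hmaps : MapsTo (fun x : X => (x : H) + g x) s U)
    (hcrit : ∀ x ∈ s, Xᗮ.orthogonalProjectionOnto (gradient ψ ((x : H) + g x)) = 0)
    (hx : x ∈ s) :
    gradient (fun x' : X => ψ ((x' : H) + g x')) x
      = X.orthogonalProjectionOnto (gradient ψ ((x : H) + g x)) := by
  rw [gradient, fderiv_reduced hU hψ hs hg hmaps hcrit hx, toDual_symm_comp_subtypeL]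
  rfl

theorem hasFDerivAt_fderiv_reduced (hU : IsOpen U) (hψ : ContDiffOn ℝ 2 ψ U) (hs : IsOpen s)
    (hg : ContDiffOn ℝ 1 g s) (hmaps : MapsTo (fun x : X => (x : H) + g x) s U)
    (hcrit : ∀ x ∈ s, Xᗮ.orthogonalProjectionOnto (gradient ψ ((x : H) + g x)) = 0)
    (hx : x ∈ s) :
    HasFDerivAt (fderiv ℝ (fun x' : X => ψ ((x' : H) + g x')))
      (((ContinuousLinearMap.compL ℝ X H ℝ).flip X.subtypeL).comp
        ((fderiv ℝ (fderiv ℝ ψ) ((x : H) + g x)).comp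
          (X.subtypeL + Xᗮ.subtypeL.comp (fderiv ℝ g x)))) x := by
  have hψ' : DifferentiableOn ℝ (fderiv ℝ ψ) U :=
    (hψ.fderiv_of_isOpen hU (m := 1) (by norm_num)).differentiableOn one_ne_zero
  have hg' : DifferentiableOn ℝ g s := hg.differentiableOn one_ne_zero
  have hfderiv : fderiv ℝ (fun x' : X => ψ ((x' : H) + g x')) =ᶠ[𝓝 x]
      fun x' => (ContinuousLinearMap.compL ℝ X H ℝ).flip X.subtypeL
        (fderiv ℝ ψ ((x' : H) + g x')) := by
    filter_upwards [hs.mem_nhds hx] with x' hx'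
    exact fderiv_reduced hU (hψ.differentiableOn two_ne_zero) hs hg' hmaps hcrit hx'
  have hcurve : HasFDerivAt (fun x' : X => (x' : H) + g x')
      (X.subtypeL + Xᗮ.subtypeL.comp (fderiv ℝ g x)) x :=
    X.subtypeL.hasFDerivAt.add
      (Xᗮ.subtypeL.hasFDerivAt.comp x (hg'.differentiableAt (hs.mem_nhds hx)).hasFDerivAt)
  exact (((ContinuousLinearMap.compL ℝ X H ℝ).flip X.subtypeL).hasFDerivAt.comp x
    ((hψ'.differentiableAt (hU.mem_nhds (hmaps hx))).hasFDerivAt.comp x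
      hcurve)).congr_of_eventuallyEq hfderiv

theorem contDiffOn_reduced (hU : IsOpen U) (hψ : ContDiffOn ℝ 2 ψ U) (hs : IsOpen s)
    (hg : ContDiffOn ℝ 1 g s) (hmaps : MapsTo (fun x : X => (x : H) + g x) s U)
    (hcrit : ∀ x ∈ s, Xᗮ.orthogonalProjectionOnto (gradient ψ ((x : H) + g x)) = 0) :
    ContDiffOn ℝ 2 (fun x' : X => ψ ((x' : H) + g x')) s := by
  have hψ1 : DifferentiableOn ℝ ψ U := hψ.differentiableOn two_ne_zero
  have hg1 : DifferentiableOn ℝ g s := hg.differentiableOn one_ne_zero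
  have hcurve : ContDiffOn ℝ 1 (fun x : X => (x : H) + g x) s :=
    X.subtypeL.contDiff.contDiffOn.add (Xᗮ.subtypeL.contDiff.comp_contDiffOn hg)
  have hfderiv :
      ContDiffOn ℝ 1 (fun x : X => (fderiv ℝ ψ ((x : H) + g x)).comp X.subtypeL) s :=
    ((hψ.fderiv_of_isOpen hU le_rfl).comp hcurve hmaps).clm_comp contDiffOn_const
  rw [show (2 : WithTop ℕ∞) = 1 + 1 from rfl, contDiffOn_succ_iff_fderiv_of_isOpen hs]
  exact ⟨hψ1.comp (hcurve.differentiableOn one_ne_zero) hmaps, by simp,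
    hfderiv.congr fun x hx => fderiv_reduced hU hψ1 hs hg1 hmaps hcrit hx⟩

end Reduced
theorem lyapunov_schmidt_reduced_functional_general
    {H : Type*} [NormedAddCommGroup H] [InnerProductSpace ℝ H] [CompleteSpace H]
    (U : Set H) (hUopen : IsOpen U)
    (a b : ℝ)
    (ψ : ℝ → H → ℝ)
    -- `ψ` is a continuous family of `C²` functionals parametrized by `I = [a,b]`:
    (hψC2 : ∀ l ∈ Icc a b, ContDiffOn ℝ 2 (ψ l) U)
    (hψcont : ContinuousOn (fun p : ℝ × H => ψ p.1 p.2) (Icc a b ×ˢ U))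
    (hψd1 : ContinuousOn (fun p : ℝ × H => fderiv ℝ (ψ p.1) p.2) (Icc a b ×ˢ U))
    (hψd2 : ContinuousOn (fun p : ℝ × H => fderiv ℝ (fderiv ℝ (ψ p.1)) p.2) (Icc a b ×ˢ U))
    -- orthogonal splitting `H = X ⊕ Y` with `Y = Xᗮ` and `dim X < ∞`:
    (X : Submodule ℝ H) [FiniteDimensional ℝ X]
    -- `B ⊆ X` and `g : I × B → Y` as provided by the Lyapunov–Schmidt lemma:
    (δ : ℝ) (g : ℝ → X → Xᗮ)
    (hgcont : ContinuousOn (fun p : ℝ × X => g p.1 p.2) (Icc a b ×ˢ ball 0 δ))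
    (hgsol : ∀ l ∈ Icc a b, ∀ x ∈ ball (0 : X) δ,
      ((x : H) + (g l x : H)) ∈ U ∧
      Submodule.orthogonalProjection Xᗮ (gradient (ψ l) ((x : H) + (g l x : H))) = 0)
    (hgC1 : ∀ l ∈ Icc a b, ContDiffOn ℝ 1 (g l) (ball 0 δ))
    (hgd : ContinuousOn (fun p : ℝ × X => fderiv ℝ (g p.1) p.2) (Icc a b ×ˢ ball 0 δ)) :
    -- `ψ̄(λ,x) := ψ(λ, x + g(λ,x))` is a continuous family of `C²` functionals on `I × B`:
    (∀ l ∈ Icc a b,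
      ContDiffOn ℝ 2 (fun x : X => ψ l ((x : H) + (g l x : H))) (ball 0 δ)) ∧
    ContinuousOn (fun p : ℝ × X => ψ p.1 ((p.2 : H) + (g p.1 p.2 : H)))
      (Icc a b ×ˢ ball 0 δ) ∧
    ContinuousOn (fun p : ℝ × X =>
        fderiv ℝ (fun x : X => ψ p.1 ((x : H) + (g p.1 x : H))) p.2)
      (Icc a b ×ˢ ball 0 δ) ∧
    ContinuousOn (fun p : ℝ × X =>
        fderiv ℝ (fderiv ℝ (fun x : X => ψ p.1 ((x : H) + (g p.1 x : H)))) p.2)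
      (Icc a b ×ˢ ball 0 δ) ∧
    -- `∇_x ψ̄(λ,x) = f̄(λ,x) = f₁(λ, x, g(λ,x))` on `I × B`:
    (∀ l ∈ Icc a b, ∀ x ∈ ball (0 : X) δ,
      gradient (fun x' : X => ψ l ((x' : H) + (g l x' : H))) x
        = Submodule.orthogonalProjection X (gradient (ψ l) ((x : H) + (g l x : H)))) := by
  have hB : IsOpen (ball (0 : X) δ) := isOpen_ball
  have hmaps : ∀ l ∈ Icc a b, MapsTo (fun x : X => (x : H) + g l x) (ball 0 δ) U :=
    fun l hl x hx => (hgsol l hl x hx).1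
  have hsol : ∀ l ∈ Icc a b, ∀ x ∈ ball (0 : X) δ,
      Xᗮ.orthogonalProjectionOnto (gradient (ψ l) ((x : H) + g l x)) = 0 :=
    fun l hl x hx => (hgsol l hl x hx).2
  have hψ1 : ∀ l ∈ Icc a b, DifferentiableOn ℝ (ψ l) U :=
    fun l hl => (hψC2 l hl).differentiableOn two_ne_zero
  have hg1 : ∀ l ∈ Icc a b, DifferentiableOn ℝ (g l) (ball 0 δ) :=
    fun l hl => (hgC1 l hl).differentiableOn one_ne_zero
  have hgraph : ContinuousOn (fun p : ℝ × X => (p.1, (p.2 : H) + g p.1 p.2))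
      (Icc a b ×ˢ ball 0 δ) :=
    continuousOn_fst.prodMk ((continuous_subtype_val.comp continuous_snd).continuousOn.add
      (continuous_subtype_val.comp_continuousOn hgcont))
  have hgraph_maps : MapsTo (fun p : ℝ × X => (p.1, (p.2 : H) + g p.1 p.2))
      (Icc a b ×ˢ ball 0 δ) (Icc a b ×ˢ U) :=
    fun p hp => ⟨hp.1, hmaps p.1 hp.1 hp.2⟩
  refine ⟨fun l hl =>
      contDiffOn_reduced hUopen (hψC2 l hl) hB (hgC1 l hl) (hmaps l hl) (hsol l hl),
    hψcont.comp hgraph hgraph_maps, ?_, ?_,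
    fun l hl x hx =>
      gradient_reduced hUopen (hψ1 l hl) hB (hg1 l hl) (hmaps l hl) (hsol l hl) hx⟩
  · refine ContinuousOn.congr ?_ fun p hp =>
      fderiv_reduced hUopen (hψ1 p.1 hp.1) hB (hg1 p.1 hp.1) (hmaps p.1 hp.1) (hsol p.1 hp.1) hp.2
    exact (hψd1.comp hgraph hgraph_maps).clm_comp continuousOn_const
  · refine ContinuousOn.congr ?_ fun p hp =>
      (hasFDerivAt_fderiv_reduced hUopen (hψC2 p.1 hp.1) hB (hgC1 p.1 hp.1) (hmaps p.1 hp.1)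
        (hsol p.1 hp.1) hp.2).fderiv
    exact
      (continuousOn_const (c := (ContinuousLinearMap.compL ℝ X H ℝ).flip X.subtypeL)).clm_comp
        ((hψd2.comp hgraph hgraph_maps).clm_comp
          (continuousOn_const.add (continuousOn_const.clm_comp hgd)))

/-- **Lyapunov–Schmidt reduction, properties of the reduced functional.**
With the setting and the map `g` provided by the Lyapunov–Schmidt lemma, the reduced
family `ψ̄(λ,x) := ψ(λ, x + g(λ,x))` is a continuous family of `C²` functionals on
`I × B` and its gradient is `f̄(λ,x) := f₁(λ, x, g(λ,x))`, the `X`-component of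
`∇ψ_λ` at `x + g(λ,x)`. -/
theorem lyapunov_schmidt_reduced_functional
    {H : Type*} [NormedAddCommGroup H] [InnerProductSpace ℝ H] [CompleteSpace H]
    [TopologicalSpace.SeparableSpace H]
    (U : Set H) (hUopen : IsOpen U) (hU0 : (0 : H) ∈ U)
    (a b : ℝ) (hab : a ≤ b)
    (ψ : ℝ → H → ℝ)
    -- `ψ` is a continuous family of `C²` functionals parametrized by `I = [a,b]`:
    (hψC2 : ∀ l ∈ Icc a b, ContDiffOn ℝ 2 (ψ l) U)
    (hψcont : ContinuousOn (fun p : ℝ × H => ψ p.1 p.2) (Icc a b ×ˢ U))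
    (hψd1 : ContinuousOn (fun p : ℝ × H => fderiv ℝ (ψ p.1) p.2) (Icc a b ×ˢ U))
    (hψd2 : ContinuousOn (fun p : ℝ × H => fderiv ℝ (fderiv ℝ (ψ p.1)) p.2) (Icc a b ×ˢ U))
    -- `f(λ, 0) = 0` for all `λ ∈ I`, where `f(λ,h) := ∇ψ_λ(h)`:
    (hcrit : ∀ l ∈ Icc a b, gradient (ψ l) 0 = 0)
    -- orthogonal splitting `H = X ⊕ Y` with `Y = Xᗮ` and `dim X < ∞`:
    (X : Submodule ℝ H) [FiniteDimensional ℝ X]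
    -- `D_y f₂(λ,0,0) : Y → Y` is invertible for every `λ ∈ I`:
    (hD : ∀ l ∈ Icc a b, ∃ D : Xᗮ →L[ℝ] Xᗮ, Function.Bijective D ∧
      HasFDerivAt (fun y : Xᗮ => Submodule.orthogonalProjection Xᗮ (gradient (ψ l) (y : H))) D 0)
    -- `B ⊆ X` and `g : I × B → Y` as provided by the Lyapunov–Schmidt lemma:
    (δ : ℝ) (hδ : 0 < δ) (g : ℝ → X → Xᗮ)
    (hgcont : ContinuousOn (fun p : ℝ × X => g p.1 p.2) (Icc a b ×ˢ ball 0 δ))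
    (hg0 : ∀ l ∈ Icc a b, g l 0 = 0)
    (hgsol : ∀ l ∈ Icc a b, ∀ x ∈ ball (0 : X) δ,
      ((x : H) + (g l x : H)) ∈ U ∧
      Submodule.orthogonalProjection Xᗮ (gradient (ψ l) ((x : H) + (g l x : H))) = 0)
    (hgC1 : ∀ l ∈ Icc a b, ContDiffOn ℝ 1 (g l) (ball 0 δ))
    (hgd : ContinuousOn (fun p : ℝ × X => fderiv ℝ (g p.1) p.2) (Icc a b ×ˢ ball 0 δ)) :
    -- `ψ̄(λ,x) := ψ(λ, x + g(λ,x))` is a continuous family of `C²` functionals on `I × B`: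
    (∀ l ∈ Icc a b,
      ContDiffOn ℝ 2 (fun x : X => ψ l ((x : H) + (g l x : H))) (ball 0 δ)) ∧
    ContinuousOn (fun p : ℝ × X => ψ p.1 ((p.2 : H) + (g p.1 p.2 : H)))
      (Icc a b ×ˢ ball 0 δ) ∧
    ContinuousOn (fun p : ℝ × X =>
        fderiv ℝ (fun x : X => ψ p.1 ((x : H) + (g p.1 x : H))) p.2)
      (Icc a b ×ˢ ball 0 δ) ∧
    ContinuousOn (fun p : ℝ × X =>
        fderiv ℝ (fderiv ℝ (fun x : X => ψ p.1 ((x : H) + (g p.1 x : H)))) p.2)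
      (Icc a b ×ˢ ball 0 δ) ∧
    -- `∇_x ψ̄(λ,x) = f̄(λ,x) = f₁(λ, x, g(λ,x))` on `I × B`:
    (∀ l ∈ Icc a b, ∀ x ∈ ball (0 : X) δ,
      gradient (fun x' : X => ψ l ((x' : H) + (g l x' : H))) x
        = Submodule.orthogonalProjection X (gradient (ψ l) ((x : H) + (g l x : H)))) :=
  lyapunov_schmidt_reduced_functional_general U hUopen a b ψ hψC2 hψcont hψd1 hψd2 X δ g hgcont
    hgsol hgC1 hgd
end

section
/- Let I = [a,b], ψ : I × U → ℝ a continuous family of C^2 functionals with f(λ,h) := ∇ψ_λ(h) and f(λ,0) = 0 for all λ ∈ I, let H = X ⊕ Y be an orthogonal splitting with dim X < ∞ such that D_y f_2(λ,0,0) : Y → Y is invertible for all λ ∈ I, and let B ⊂ X, g : I × B → Y and the reduced family ψ̄(λ,x) := ψ(λ, x, g(λ,x)) be as produced by the Lyapunov–Schmidt lemma. Then a point λ* ∈ I is a bifurcation point of critical points of ψ from the trivial branch if and only if λ* is a bifurcation point of critical points of ψ̄ : I × B → ℝ from the trivial branch. -/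
/-!
Because `ψ̄_λ(x) = ψ_λ(x + g(λ,x))` and `∇ψ_λ(x + g(λ,x))` already lies in `X` (its `Xᗮ`-component
vanishes by construction of `g`), the chain-rule term through `Dg` is orthogonal to it, so
`∇ψ̄_λ(x) = ∇ψ_λ(x + g(λ,x))`. Conversely, near `0` the uniqueness of `g` forces every critical
point `h` of `ψ_λ` onto the graph of `g`: `h = P_X h + g(λ, P_X h)`. Bifurcation at `λ*` means that
`(λ*, 0)` lies in the closure of the nontrivial critical points, and the maps
`(λ, x) ↦ (λ, x + g(λ,x))` and `(λ, h) ↦ (λ, P_X h)`, continuous and fixing `(λ*, 0)`, carry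
nontrivial critical points of either family to those of the other.
-/

open Set Metric

/-- A point `l₀` of the parameter space `P ⊆ Λ` is a bifurcation point of critical points of
the family `ψ` from the trivial branch if every neighborhood of `(l₀, 0)` contains a point
`(λ, x)` with `λ ∈ P`, `x ∈ U`, `x ≠ 0` and `∇ψ_λ(x) = 0`. -/
def IsBifurcationPoint {Λ : Type*} [TopologicalSpace Λ] {E : Type*} [NormedAddCommGroup E]
    [InnerProductSpace ℝ E] [CompleteSpace E] (P : Set Λ) (U : Set E) (ψ : Λ → E → ℝ)
    (l₀ : Λ) : Prop :=
  ∀ W ∈ nhds (l₀, (0 : E)), ∃ p : Λ × E,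
    p ∈ W ∧ p.1 ∈ P ∧ p.2 ∈ U ∧ p.2 ≠ 0 ∧ gradient (ψ p.1) p.2 = 0

section Bifurcation

variable {Λ : Type*} {E : Type*} [NormedAddCommGroup E] [InnerProductSpace ℝ E] [CompleteSpace E]

def nontrivialCriticalPoints (P : Set Λ) (U : Set E) (ψ : Λ → E → ℝ) : Set (Λ × E) :=
  {p | p.1 ∈ P ∧ p.2 ∈ U ∧ p.2 ≠ 0 ∧ gradient (ψ p.1) p.2 = 0}

theorem isBifurcationPoint_iff_mem_closure [TopologicalSpace Λ] {P : Set Λ} {U : Set E}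
    {ψ : Λ → E → ℝ} {l₀ : Λ} :
    IsBifurcationPoint P U ψ l₀ ↔ (l₀, 0) ∈ closure (nontrivialCriticalPoints P U ψ) := by
  rw [mem_closure_iff_nhds]
  rfl

end Bifurcation

section Reduction

variable {H : Type*} [NormedAddCommGroup H] [InnerProductSpace ℝ H] {K : Submodule ℝ H}

theorem coe_add_coe_orthogonal_ne_zero {x : K} (hx : x ≠ 0) (y : Kᗮ) : (x : H) + y ≠ 0 := by
  intro hxy
  have hx' : (x : H) ∈ Kᗮ := by
    rw [eq_neg_of_add_eq_zero_left hxy]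
    exact Kᗮ.neg_mem y.2
  exact hx <| Subtype.ext <|
    inner_self_eq_zero.mp (Submodule.inner_right_of_mem_orthogonal x.2 hx')

variable [CompleteSpace H] [CompleteSpace K]

theorem hasGradientAt_comp_add_graph {φ : H → ℝ} {g : K → Kᗮ} {x : K}
    (hφ : DifferentiableAt ℝ φ (x + g x)) (hg : DifferentiableAt ℝ g x)
    (hK : gradient φ (x + g x) ∈ K) :
    HasGradientAt (fun x : K => φ (x + g x)) ⟨gradient φ (x + g x), hK⟩ x := by
  have hgraph : HasFDerivAt (fun x : K => (x : H) + g x)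
      (K.subtypeL + Kᗮ.subtypeL.comp (fderiv ℝ g x)) x :=
    K.subtypeL.hasFDerivAt.add (Kᗮ.subtypeL.hasFDerivAt.comp x hg.hasFDerivAt)
  have hcomp := (hasGradientAt_iff_hasFDerivAt.mp hφ.hasGradientAt).comp x hgraph
  refine hasGradientAt_iff_hasFDerivAt.mpr (hcomp.congr_fderiv ?_)
  ext v
  have hperp : inner ℝ (gradient φ (x + g x)) (fderiv ℝ g x v : H) = 0 :=
    Submodule.inner_right_of_mem_orthogonal hK (fderiv ℝ g x v).2
  simp only [ContinuousLinearMap.comp_apply, add_apply,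
    Submodule.subtypeL_apply, InnerProductSpace.toDual_apply_apply, inner_add_right, hperp,
    add_zero, Submodule.coe_inner]

theorem gradient_comp_add_graph_eq_zero_iff {φ : H → ℝ} {g : K → Kᗮ} {x : K}
    (hφ : DifferentiableAt ℝ φ (x + g x)) (hg : DifferentiableAt ℝ g x)
    (hK : Kᗮ.orthogonalProjectionOnto (gradient φ (x + g x)) = 0) :
    gradient (fun x : K => φ (x + g x)) x = 0 ↔ gradient φ (x + g x) = 0 := by
  have hK' : gradient φ (x + g x) ∈ K := by
    simpa only [Submodule.orthogonal_orthogonal] using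
      Submodule.orthogonalProjectionOnto_eq_zero_iff.mp hK
  rw [(hasGradientAt_comp_add_graph hφ hg hK').gradient, Submodule.mk_eq_zero]

variable {Λ : Type*} {P : Set Λ} {U : Set H} {ψ : Λ → H → ℝ}
  {g : Λ → K → Kᗮ}

theorem mapsTo_add_graph_nontrivialCriticalPoints {B : Set K}
    (hgU : ∀ l ∈ P, ∀ x ∈ B, (x : H) + g l x ∈ U)
    (hcrit : ∀ l ∈ P, ∀ x ∈ B,
      gradient (fun x : K => ψ l (x + g l x)) x = 0 → gradient (ψ l) (x + g l x) = 0) :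
    MapsTo (fun p : Λ × K => (p.1, (p.2 : H) + g p.1 p.2))
      (nontrivialCriticalPoints P B fun l (x : K) => ψ l (x + g l x))
      (nontrivialCriticalPoints P U ψ) := by
  rintro ⟨l, x⟩ ⟨hl, hx, hx0, hcx⟩
  exact ⟨hl, hgU l hl x hx, coe_add_coe_orthogonal_ne_zero hx0 _, hcrit l hl x hx hcx⟩

theorem mapsTo_orthogonalProjection_nontrivialCriticalPoints {δ ε : ℝ}
    (hg0 : ∀ l ∈ P, g l 0 = 0)
    (hguniq : ∀ l ∈ P, ∀ x ∈ ball (0 : K) δ, ∀ y : Kᗮ, ‖y‖ ≤ ε → (x : H) + y ∈ U →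
      Kᗮ.orthogonalProjectionOnto (gradient (ψ l) (x + y)) = 0 → y = g l x)
    (hcrit : ∀ l ∈ P, ∀ x ∈ ball (0 : K) δ,
      gradient (ψ l) (x + g l x) = 0 → gradient (fun x : K => ψ l (x + g l x)) x = 0) :
    MapsTo (fun p : Λ × H => (p.1, K.orthogonalProjectionOnto p.2))
      (univ ×ˢ ball 0 (min δ ε) ∩ nontrivialCriticalPoints P U ψ)
      (nontrivialCriticalPoints P (ball 0 δ) fun l (x : K) => ψ l (x + g l x)) := by
  rintro ⟨l, h⟩ ⟨⟨-, hh⟩, hl, hU, hh0, hch⟩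
  set x := K.orthogonalProjectionOnto h
  set y := Kᗮ.orthogonalProjectionOnto h
  have hxy : (x : H) + y = h := K.starProjection_add_starProjection_orthogonal h
  rw [mem_ball_zero_iff, lt_min_iff] at hh
  have hx : x ∈ ball 0 δ :=
    mem_ball_zero_iff.2 ((K.norm_orthogonalProjectionOnto_apply_le h).trans_lt hh.1)
  have hyg : y = g l x :=
    hguniq l hl x hx y ((Kᗮ.norm_orthogonalProjectionOnto_apply_le h).trans hh.2.le)
      (hxy ▸ hU) (by rw [hxy, hch, map_zero])
  have hcx : gradient (ψ l) (x + g l x) = 0 := by rwa [← hyg, hxy]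
  refine ⟨hl, hx, fun (hx0 : x = 0) => hh0 ?_, hcrit l hl x hx hcx⟩
  rw [← hxy, hyg, hx0, hg0 l hl, Submodule.coe_zero, Submodule.coe_zero, add_zero]

end Reduction

theorem lyapunov_schmidt_preserves_bifurcation_general
    {H : Type*} [NormedAddCommGroup H] [InnerProductSpace ℝ H] [CompleteSpace H]
    (U : Set H) (hUopen : IsOpen U)
    (a b : ℝ)
    (ψ : ℝ → H → ℝ)
    -- `ψ` is a continuous family of `C²` functionals parametrized by `I = [a,b]`:
    (hψC2 : ∀ l ∈ Icc a b, ContDiffOn ℝ 2 (ψ l) U)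
    -- orthogonal splitting `H = X ⊕ Y` with `Y = Xᗮ` and `dim X < ∞`:
    (X : Submodule ℝ H) [FiniteDimensional ℝ X]
    -- `B ⊆ X` and `g : I × B → Y` as provided by the Lyapunov–Schmidt lemma:
    (δ : ℝ) (hδ : 0 < δ) (g : ℝ → X → Xᗮ)
    (hgcont : ContinuousOn (fun p : ℝ × X => g p.1 p.2) (Icc a b ×ˢ ball 0 δ))
    (hg0 : ∀ l ∈ Icc a b, g l 0 = 0)
    (hgsol : ∀ l ∈ Icc a b, ∀ x ∈ ball (0 : X) δ,
      ((x : H) + (g l x : H)) ∈ U ∧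
      Submodule.orthogonalProjectionOnto Xᗮ (gradient (ψ l) ((x : H) + (g l x : H))) = 0)
    (hgC1 : ∀ l ∈ Icc a b, ContDiffOn ℝ 1 (g l) (ball 0 δ))
    -- `g(λ,x)` is the unique `y` in a fixed ball of `Y` solving `f₂(λ,x,y) = 0`:
    (ε : ℝ) (hε : 0 < ε)
    (hguniq : ∀ l ∈ Icc a b, ∀ x ∈ ball (0 : X) δ, ∀ y : Xᗮ, ‖y‖ ≤ ε →
      ((x : H) + (y : H)) ∈ U →
      Submodule.orthogonalProjectionOnto Xᗮ (gradient (ψ l) ((x : H) + (y : H))) = 0 → y = g l x) :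
    -- `λ*` bifurcates for `ψ` iff it bifurcates for the reduced family `ψ̄`:
    ∀ lstar ∈ Icc a b,
      IsBifurcationPoint (Icc a b) U ψ lstar ↔
      IsBifurcationPoint (Icc a b) (ball (0 : X) δ)
        (fun l (x : X) => ψ l ((x : H) + (g l x : H))) lstar := by
  intro lstar hlstar
  have hreduced : ∀ l ∈ Icc a b, ∀ x ∈ ball (0 : X) δ,
      gradient (fun x : X => ψ l (x + g l x)) x = 0 ↔ gradient (ψ l) (x + g l x) = 0 :=
    fun l hl x hx => gradient_comp_add_graph_eq_zero_iff
      (((hψC2 l hl).contDiffAt (hUopen.mem_nhds (hgsol l hl x hx).1)).differentiableAt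
        two_ne_zero)
      (((hgC1 l hl).contDiffAt (isOpen_ball.mem_nhds hx)).differentiableAt one_ne_zero)
      (hgsol l hl x hx).2
  rw [isBifurcationPoint_iff_mem_closure, isBifurcationPoint_iff_mem_closure]
  constructor
  · intro hbif
    have hnhds : (lstar, (0 : H)) ∈ univ ×ˢ ball (0 : H) (min δ ε) :=
      ⟨trivial, mem_ball_self (lt_min hδ hε)⟩
    have hproj : Continuous fun p : ℝ × H => (p.1, X.orthogonalProjectionOnto p.2) := by
      fun_prop
    simpa using hproj.continuousWithinAt.mem_closure
      ((isOpen_univ.prod isOpen_ball).inter_closure ⟨hnhds, hbif⟩)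
      (mapsTo_orthogonalProjection_nontrivialCriticalPoints hg0 hguniq
        fun l hl x hx => (hreduced l hl x hx).2)
  · intro hbif
    have hgraph : ContinuousOn (fun p : ℝ × X => (p.1, (p.2 : H) + g p.1 p.2))
        (Icc a b ×ˢ ball 0 δ) := by
      fun_prop
    simpa [hg0 lstar hlstar] using
      ((hgraph _ ⟨hlstar, mem_ball_self hδ⟩).mono fun p hp => ⟨hp.1, hp.2.1⟩).mem_closure hbif
        (mapsTo_add_graph_nontrivialCriticalPoints (fun l hl x hx => (hgsol l hl x hx).1)
          fun l hl x hx => (hreduced l hl x hx).1)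

/-- **Bifurcation is preserved by the Lyapunov–Schmidt reduction.**
In the Lyapunov–Schmidt setting, a point `λ* ∈ I` is a bifurcation point of critical points
of `ψ` from the trivial branch iff it is a bifurcation point of critical points of the
reduced family `ψ̄(λ,x) = ψ(λ, x + g(λ,x))` from the trivial branch. -/
theorem lyapunov_schmidt_preserves_bifurcation
    {H : Type*} [NormedAddCommGroup H] [InnerProductSpace ℝ H] [CompleteSpace H]
    [TopologicalSpace.SeparableSpace H]
    (U : Set H) (hUopen : IsOpen U) (hU0 : (0 : H) ∈ U)
    (a b : ℝ) (hab : a ≤ b)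
    (ψ : ℝ → H → ℝ)
    -- `ψ` is a continuous family of `C²` functionals parametrized by `I = [a,b]`:
    (hψC2 : ∀ l ∈ Icc a b, ContDiffOn ℝ 2 (ψ l) U)
    (hψcont : ContinuousOn (fun p : ℝ × H => ψ p.1 p.2) (Icc a b ×ˢ U))
    (hψd1 : ContinuousOn (fun p : ℝ × H => fderiv ℝ (ψ p.1) p.2) (Icc a b ×ˢ U))
    (hψd2 : ContinuousOn (fun p : ℝ × H => fderiv ℝ (fderiv ℝ (ψ p.1)) p.2) (Icc a b ×ˢ U))
    -- `f(λ, 0) = 0` for all `λ ∈ I`, where `f(λ,h) := ∇ψ_λ(h)`: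
    (hcrit : ∀ l ∈ Icc a b, gradient (ψ l) 0 = 0)
    -- orthogonal splitting `H = X ⊕ Y` with `Y = Xᗮ` and `dim X < ∞`:
    (X : Submodule ℝ H) [FiniteDimensional ℝ X]
    -- `D_y f₂(λ,0,0) : Y → Y` is invertible for every `λ ∈ I`:
    (hD : ∀ l ∈ Icc a b, ∃ D : Xᗮ →L[ℝ] Xᗮ, Function.Bijective D ∧
      HasFDerivAt (fun y : Xᗮ => Submodule.orthogonalProjectionOnto Xᗮ (gradient (ψ l) (y : H))) D 0)
    -- `B ⊆ X` and `g : I × B → Y` as provided by the Lyapunov–Schmidt lemma: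
    (δ : ℝ) (hδ : 0 < δ) (g : ℝ → X → Xᗮ)
    (hgcont : ContinuousOn (fun p : ℝ × X => g p.1 p.2) (Icc a b ×ˢ ball 0 δ))
    (hg0 : ∀ l ∈ Icc a b, g l 0 = 0)
    (hgsol : ∀ l ∈ Icc a b, ∀ x ∈ ball (0 : X) δ,
      ((x : H) + (g l x : H)) ∈ U ∧
      Submodule.orthogonalProjectionOnto Xᗮ (gradient (ψ l) ((x : H) + (g l x : H))) = 0)
    (hgC1 : ∀ l ∈ Icc a b, ContDiffOn ℝ 1 (g l) (ball 0 δ))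
    (hgd : ContinuousOn (fun p : ℝ × X => fderiv ℝ (g p.1) p.2) (Icc a b ×ˢ ball 0 δ))
    -- `g(λ,x)` is the unique `y` in a fixed ball of `Y` solving `f₂(λ,x,y) = 0`:
    (ε : ℝ) (hε : 0 < ε)
    (hgball : ∀ l ∈ Icc a b, ∀ x ∈ ball (0 : X) δ, ‖g l x‖ ≤ ε)
    (hguniq : ∀ l ∈ Icc a b, ∀ x ∈ ball (0 : X) δ, ∀ y : Xᗮ, ‖y‖ ≤ ε →
      ((x : H) + (y : H)) ∈ U →
      Submodule.orthogonalProjectionOnto Xᗮ (gradient (ψ l) ((x : H) + (y : H))) = 0 → y = g l x) :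
    -- `λ*` bifurcates for `ψ` iff it bifurcates for the reduced family `ψ̄`:
    ∀ lstar ∈ Icc a b,
      IsBifurcationPoint (Icc a b) U ψ lstar ↔
      IsBifurcationPoint (Icc a b) (ball (0 : X) δ)
        (fun l (x : X) => ψ l ((x : H) + (g l x : H))) lstar :=
  lyapunov_schmidt_preserves_bifurcation_general U hUopen a b ψ hψC2 X δ hδ g hgcont hg0 hgsol hgC1
    ε hε hguniq
end

section
/- Let A be a real symmetric 2n×2n matrix. Then there exists K ∈ ℕ such that for every integer k ≥ K the matrix L^k(A) is invertible and its signature sgn L^k(A) equals 0. In particular, the index i(A) := (1/2)·Σ_{k=1}^∞ sgn L^k(A) is a well-defined finite sum. -/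
open Set

/-- The standard symplectic `2n×2n` matrix `σ`, in block form `[[0, 1], [-1, 0]]`. -/
noncomputable def sympMat (n : ℕ) : Matrix (Fin n ⊕ Fin n) (Fin n ⊕ Fin n) ℝ :=
  Matrix.fromBlocks 0 1 (-1) 0

/-- The `4n×4n` block matrix `L^k(A) = [[A/k, σ], [-σ, A/k]]`, `k ≥ 1`. -/
noncomputable def LkMat (n : ℕ) (A : Matrix (Fin n ⊕ Fin n) (Fin n ⊕ Fin n) ℝ) (k : ℕ) :
    Matrix ((Fin n ⊕ Fin n) ⊕ (Fin n ⊕ Fin n)) ((Fin n ⊕ Fin n) ⊕ (Fin n ⊕ Fin n)) ℝ :=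
  Matrix.fromBlocks ((1 / (k : ℝ)) • A) (sympMat n) (-(sympMat n)) ((1 / (k : ℝ)) • A)

/-- The signature of a real symmetric matrix: the number of positive eigenvalues minus the
number of negative eigenvalues, counted with multiplicity (junk value `0` if the matrix is
not symmetric). -/
noncomputable def matSign {m : Type*} [Fintype m] [DecidableEq m]
    (A : Matrix m m ℝ) : ℤ :=
  if hA : A.IsHermitian then
    ((Finset.univ.filter fun i => 0 < hA.eigenvalues i).card : ℤ) -
    ((Finset.univ.filter fun i => hA.eigenvalues i < 0).card : ℤ)
  else 0

/-- The index `i(A) = (1/2) Σ_{k≥1} sgn L^k(A)` of a symmetric `2n×2n` matrix `A`. -/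
noncomputable def hamIndex (n : ℕ) (A : Matrix (Fin n ⊕ Fin n) (Fin n ⊕ Fin n) ℝ) : ℚ :=
  (1 / 2 : ℚ) * ∑ᶠ k : ℕ, if 1 ≤ k then (matSign (LkMat n A k) : ℚ) else 0

/-! The matrix `L^k(A)` is `L₀ + (1/k) diag(A, A)` with `L₀ = [[0, σ], [-σ, 0]]`, an involution.
The involution `J = diag(1, -1)` anticommutes with `L₀`, so it swaps the `±1` eigenspaces of `L₀`,
which therefore both have dimension `2n`. Once `‖diag(A, A)‖ < k`, the quadratic form of `L^k(A)`
is positive definite on the `+1` eigenspace and negative definite on the `-1` eigenspace. Comparing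
with the spans of its eigenvectors, `L^k(A)` has at least `2n` positive and at least `2n` negative
eigenvalues, hence exactly `2n` of each and none equal to zero. -/

open Matrix Module Finset
open scoped RealInnerProductSpace

section Inertia

variable {ι K E : Type*} [Fintype ι] [Field K] [LinearOrder K] [IsStrictOrderedRing K]
  [AddCommGroup E] [Module K E] [FiniteDimensional K E] (b : Basis ι K E) (μ : ι → K)
  {V : Submodule K E}

theorem Module.Basis.finrank_le_card_pos_of_forall_pos
    (hV : ∀ x ∈ V, x ≠ 0 → 0 < ∑ i, μ i * b.repr x i ^ 2) :
    finrank K V ≤ #{i | 0 < μ i} := by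
  classical
  let s : Set ι := {i | 0 < μ i}
  -- the span of the `b i` with `μ i ≤ 0`
  let W : Submodule K E := (Finsupp.supported K K sᶜ).map (b.repr.symm : (ι →₀ K) →ₗ[K] E)
  have hW : ∀ x ∈ W, ∀ i, 0 < μ i → b.repr x i = 0 := fun x hx i hi =>
    (Finsupp.mem_supported' _ _).1 ((Submodule.mem_map_equiv _).1 hx) i (by simpa [s] using hi)
  have hVW : Disjoint V W := by
    refine Submodule.disjoint_def.2 fun x hxV hxW => not_not.1 fun hx0 => ?_
    refine (hV x hxV hx0).not_ge (Finset.sum_nonpos fun i _ => ?_)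
    rcases le_or_gt (μ i) 0 with hi | hi
    · exact mul_nonpos_of_nonpos_of_nonneg hi (sq_nonneg _)
    · simp [hW x hxW i hi]
  have hWrank : finrank K W = #{i | μ i ≤ 0} := by
    rw [LinearEquiv.finrank_map_eq, (Finsupp.supportedEquivFinsupp sᶜ).finrank_eq,
      finrank_finsupp_self, ← Set.toFinset_card]
    simp [s]
  have hcard := card_filter_add_card_filter_not (s := univ) (fun i => 0 < μ i)
  simp only [not_lt, card_univ] at hcard
  have := Submodule.finrank_add_finrank_le_of_disjoint hVW
  rw [finrank_eq_card_basis b, hWrank] at this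
  omega

theorem Module.Basis.finrank_le_card_neg_of_forall_neg
    (hV : ∀ x ∈ V, x ≠ 0 → ∑ i, μ i * b.repr x i ^ 2 < 0) :
    finrank K V ≤ #{i | μ i < 0} := by
  simpa using b.finrank_le_card_pos_of_forall_pos (-μ) fun x hx hx0 => by
    simpa [neg_mul, sum_neg_distrib] using hV x hx hx0

end Inertia

namespace Module.End

variable {K V : Type*} [Field K] [AddCommGroup V] [Module K V] [FiniteDimensional K V]

theorem finrank_le_finrank_eigenspace_one_add_finrank_eigenspace_neg_one {f : End K V}
    (hf : Function.Involutive f) :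
    finrank K V ≤ finrank K (eigenspace f 1) + finrank K (eigenspace f (-1)) := by
  have hrange : LinearMap.range (f + 1) ≤ eigenspace f 1 := by
    rintro _ ⟨x, rfl⟩
    simp [hf x, add_comm]
  have hker : LinearMap.ker (f + 1) ≤ eigenspace f (-1) := fun x hx => by
    simpa [mem_eigenspace_iff, add_eq_zero_iff_eq_neg] using hx
  have := LinearMap.finrank_range_add_finrank_ker (f + 1)
  have := Submodule.finrank_mono hrange
  have := Submodule.finrank_mono hker
  omega

theorem finrank_eigenspace_one_eq_finrank_eigenspace_neg_one {f g : End K V}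
    (hg : Function.Involutive g) (hgf : ∀ x, g (f x) = -f (g x)) :
    finrank K (eigenspace f 1) = finrank K (eigenspace f (-1)) := by
  let e : V ≃ₗ[K] V := LinearEquiv.ofInvolutive g hg
  have hmaps : ∀ a : K, (eigenspace f a).map (e : End K V) ≤ eigenspace f (-a) := by
    rintro a _ ⟨x, hx, rfl⟩
    rw [SetLike.mem_coe, mem_eigenspace_iff] at hx
    rw [mem_eigenspace_iff]
    simp [e, ← neg_eq_iff_eq_neg.2 (hgf x), hx]
  have h₁ := Submodule.finrank_mono (hmaps 1)
  have h₂ := Submodule.finrank_mono (hmaps (-1))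
  rw [LinearEquiv.finrank_map_eq] at h₁ h₂
  rw [neg_neg] at h₂
  exact le_antisymm h₁ h₂

end Module.End

section Perturbation

variable {F : Type*} [NormedAddCommGroup F] [InnerProductSpace ℝ F]

theorem ContinuousLinearMap.inner_apply_self_pos_of_apply_eq_self {T T₀ : F →L[ℝ] F}
    (hT : ‖T - T₀‖ < 1) {x : F} (hx : T₀ x = x) (hx0 : x ≠ 0) : 0 < ⟪x, T x⟫ := by
  have hsplit : ⟪x, T x⟫ = ‖x‖ ^ 2 + ⟪x, (T - T₀) x⟫ := by
    rw [_root_.sub_apply, inner_sub_right, hx, real_inner_self_eq_norm_sq]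
    ring
  have herr : |⟪x, (T - T₀) x⟫| ≤ ‖T - T₀‖ * ‖x‖ ^ 2 :=
    (abs_real_inner_le_norm _ _).trans <| by
      nlinarith [(T - T₀).le_opNorm x, norm_nonneg x]
  have hx_pos : 0 < ‖x‖ := norm_pos_iff.2 hx0
  nlinarith [(abs_le.1 herr).1, pow_pos hx_pos 2]

theorem ContinuousLinearMap.inner_apply_self_neg_of_apply_eq_neg {T T₀ : F →L[ℝ] F}
    (hT : ‖T - T₀‖ < 1) {x : F} (hx : T₀ x = -x) (hx0 : x ≠ 0) : ⟪x, T x⟫ < 0 := by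
  have := inner_apply_self_pos_of_apply_eq_self (T := -T) (T₀ := -T₀)
    (by rwa [neg_sub_neg, norm_sub_rev]) (by simp [hx]) hx0
  simpa [inner_neg_right] using this

end Perturbation

section Eigenvalues

variable {m : Type*} [Fintype m] [DecidableEq m]

theorem Matrix.IsHermitian.inner_toEuclideanLin_self {L : Matrix m m ℝ} (hL : L.IsHermitian)
    (x : EuclideanSpace ℝ m) :
    ⟪x, toEuclideanLin L x⟫ = ∑ i, hL.eigenvalues i * hL.eigenvectorBasis.repr x i ^ 2 := by
  set b := hL.eigenvectorBasis
  have hb : ∀ i, toEuclideanLin L (b i) = hL.eigenvalues i • b i := fun i =>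
    WithLp.ofLp_injective _ (by simpa using hL.mulVec_eigenvectorBasis i)
  have hrepr : ∀ i, b.repr (toEuclideanLin L x) i = hL.eigenvalues i * b.repr x i := by
    intro i
    rw [b.repr_apply_apply, b.repr_apply_apply, ← isSymmetric_toEuclideanLin_iff.2 hL]
    exact (congrArg (⟪·, x⟫) (hb i)).trans (real_inner_smul_left _ _ _)
  rw [← b.sum_inner_mul_inner x]
  refine sum_congr rfl fun i _ => ?_
  rw [real_inner_comm (b i) x, ← b.repr_apply_apply, ← b.repr_apply_apply, hrepr]
  ring

theorem Matrix.IsHermitian.isUnit_and_matSign_eq_zero_of_definite {L : Matrix m m ℝ}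
    (hL : L.IsHermitian) {P N : Submodule ℝ (EuclideanSpace ℝ m)}
    (hP : ∀ x ∈ P, x ≠ 0 → 0 < ⟪x, toEuclideanLin L x⟫)
    (hN : ∀ x ∈ N, x ≠ 0 → ⟪x, toEuclideanLin L x⟫ < 0)
    (hPN : finrank ℝ P = finrank ℝ N) (hcard : Fintype.card m ≤ finrank ℝ P + finrank ℝ N) :
    IsUnit L ∧ matSign L = 0 := by
  rw [matSign, dif_pos hL]
  set μ := hL.eigenvalues
  set pos : Finset m := {i | 0 < μ i}
  set neg : Finset m := {i | μ i < 0}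
  have hpos : finrank ℝ P ≤ #pos :=
    hL.eigenvectorBasis.toBasis.finrank_le_card_pos_of_forall_pos μ fun x hx hx0 => by
      simpa [hL.inner_toEuclideanLin_self] using hP x hx hx0
  have hneg : finrank ℝ N ≤ #neg :=
    hL.eigenvectorBasis.toBasis.finrank_le_card_neg_of_forall_neg μ fun x hx hx0 => by
      simpa [hL.inner_toEuclideanLin_self] using hN x hx hx0
  have hunion_card : #(pos ∪ neg) = #pos + #neg :=
    card_union_of_disjoint (disjoint_filter.2 fun i _ (h : 0 < μ i) => h.not_gt)
  have hunion_le := card_le_univ (pos ∪ neg)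
  refine ⟨?_, by omega⟩
  have hunion : pos ∪ neg = Finset.univ := eq_univ_of_card _ (by omega)
  rw [isUnit_iff_isUnit_det, hL.det_eq_prod_eigenvalues, isUnit_iff_ne_zero, prod_ne_zero_iff]
  intro i _
  have hi : i ∈ pos ∪ neg := hunion ▸ Finset.mem_univ i
  simp only [pos, neg, Finset.mem_union, mem_filter_univ] at hi
  exact hi.elim ne_of_gt ne_of_lt

open Module.End ContinuousLinearMap in
theorem Matrix.IsHermitian.isUnit_and_matSign_eq_zero_of_norm_sub_lt_one
    {L L₀ J : Matrix m m ℝ} (hL : L.IsHermitian) (hL₀ : L₀ * L₀ = 1) (hJ : J * J = 1)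
    (hJL₀ : J * L₀ = -(L₀ * J))
    (hclose : ‖toEuclideanCLM (𝕜 := ℝ) (L - L₀)‖ < 1) :
    IsUnit L ∧ matSign L = 0 := by
  have hmul : ∀ (M N : Matrix m m ℝ) x, toEuclideanCLM (𝕜 := ℝ) M (toEuclideanCLM (𝕜 := ℝ) N x) =
      toEuclideanCLM (𝕜 := ℝ) (M * N) x := fun M N x => by
    rw [map_mul]; rfl
  have hinv : ∀ M : Matrix m m ℝ, M * M = 1 → Function.Involutive (toEuclideanCLM (𝕜 := ℝ) M) :=
    fun M hM x => by rw [hmul, hM, map_one]; rfl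
  set T₀ := toEuclideanCLM (𝕜 := ℝ) L₀
  rw [map_sub] at hclose
  refine hL.isUnit_and_matSign_eq_zero_of_definite (P := eigenspace (T₀ : End ℝ _) 1)
    (N := eigenspace (T₀ : End ℝ _) (-1)) (fun x hx hx0 => ?_) (fun x hx hx0 => ?_) ?_ ?_
  · exact inner_apply_self_pos_of_apply_eq_self hclose (by simpa using hx) hx0
  · exact inner_apply_self_neg_of_apply_eq_neg hclose (by simpa using hx) hx0
  · exact finrank_eigenspace_one_eq_finrank_eigenspace_neg_one (g := toEuclideanCLM (𝕜 := ℝ) J)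
      (hinv J hJ) fun x => by
        simp only [coe_coe, T₀]
        rw [hmul, hmul, hJL₀, map_neg]
        rfl
  · simpa using finrank_le_finrank_eigenspace_one_add_finrank_eigenspace_neg_one (hinv L₀ hL₀)

end Eigenvalues

section LkMat

variable {n : ℕ}

theorem sympMat_transpose : (sympMat n)ᵀ = -sympMat n := by
  simp [sympMat, fromBlocks_transpose, fromBlocks_neg]

theorem sympMat_mul_self : sympMat n * sympMat n = -1 := by
  simp [sympMat, fromBlocks_multiply, ← fromBlocks_one, fromBlocks_neg]

theorem LkMat_isHermitian {A : Matrix (Fin n ⊕ Fin n) (Fin n ⊕ Fin n) ℝ} (hA : A.IsSymm)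
    (k : ℕ) : (LkMat n A k).IsHermitian := by
  simp [LkMat, IsSymm, fromBlocks_transpose, sympMat_transpose, hA.eq]

theorem LkMat_eq_add (A : Matrix (Fin n ⊕ Fin n) (Fin n ⊕ Fin n) ℝ) (k : ℕ) :
    LkMat n A k = fromBlocks 0 (sympMat n) (-sympMat n) 0 +
      (1 / (k : ℝ)) • fromBlocks A 0 0 A := by
  simp [LkMat, fromBlocks_add, fromBlocks_smul]

theorem LkMat_isUnit_and_matSign_eq_zero {A : Matrix (Fin n ⊕ Fin n) (Fin n ⊕ Fin n) ℝ}
    (hA : A.IsSymm) {k : ℕ} (hk : ‖toEuclideanCLM (𝕜 := ℝ) (fromBlocks A 0 0 A)‖ < k) :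
    IsUnit (LkMat n A k) ∧ matSign (LkMat n A k) = 0 := by
  have hk_pos : (0 : ℝ) < k := (norm_nonneg _).trans_lt hk
  refine (LkMat_isHermitian hA k).isUnit_and_matSign_eq_zero_of_norm_sub_lt_one
    (L₀ := fromBlocks 0 (sympMat n) (-sympMat n) 0) (J := fromBlocks 1 0 0 (-1)) ?_ ?_ ?_ ?_
  · simp [fromBlocks_multiply, sympMat_mul_self, ← fromBlocks_one]
  · simp [fromBlocks_multiply, ← fromBlocks_one]
  · simp [fromBlocks_multiply, fromBlocks_neg]
  · rw [LkMat_eq_add, add_sub_cancel_left, map_smul, norm_smul, Real.norm_of_nonneg (by positivity),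
      one_div, inv_mul_lt_one₀ hk_pos]
    exact hk

end LkMat

/-- **Well-definedness of the index `i(A)`.**  For every real symmetric `2n×2n` matrix `A`
there is `K` such that for all `k ≥ K` the matrix `L^k(A)` is invertible with vanishing
signature; in particular only finitely many terms of the sum defining `i(A)` are nonzero. -/
theorem hamIndex_well_defined (n : ℕ) (A : Matrix (Fin n ⊕ Fin n) (Fin n ⊕ Fin n) ℝ)
    (hA : A.IsSymm) :
    ∃ K : ℕ, 1 ≤ K ∧
      (∀ k : ℕ, K ≤ k → IsUnit (LkMat n A k) ∧ matSign (LkMat n A k) = 0) ∧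
      {k : ℕ | 1 ≤ k ∧ matSign (LkMat n A k) ≠ 0}.Finite := by
  set C := ‖toEuclideanCLM (𝕜 := ℝ) (fromBlocks A 0 0 A)‖
  have hK : ∀ k : ℕ, ⌊C⌋₊ + 1 ≤ k → IsUnit (LkMat n A k) ∧ matSign (LkMat n A k) = 0 :=
    fun k hk => LkMat_isUnit_and_matSign_eq_zero hA <|
      (Nat.lt_floor_add_one C).trans_le (by exact_mod_cast hk)
  refine ⟨⌊C⌋₊ + 1, Nat.le_add_left 1 _, hK, (Set.finite_Iio (⌊C⌋₊ + 1)).subset fun k hk => ?_⟩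
  by_contra hk_ge
  exact hk.2 (hK k (not_lt.1 hk_ge)).2
end

section
/- Let H = H⁺ ⊕ H⁻ be an orthogonal decomposition of a real separable Hilbert space into two infinite-dimensional subspaces, J the self-adjoint involution equal to Id on H⁺ and −Id on H⁻, {e_k^+} and {e_k^-} orthonormal bases of H⁺ and H⁻, H_n the span of {e_k^± : 1 ≤ k ≤ n}, and P_n the orthogonal projection onto H_n. Let I = [a,b] and ψ : I × U → ℝ be a continuous family of C^2 functionals with ∇ψ_λ(0) = 0 for all λ, whose Hessians at 0 have the form L_λ = J + K_λ with K_λ compact self-adjoint, and with L_a and L_b invertible. Suppose n₀ is such that for all n ≥ n₀: (Id − P_n)L_λ restricted to H_n^⊥ is an invertible operator on H_n^⊥ for every λ ∈ I, and L^n_i := P_n L_i|_{H_n} : H_n → H_n is invertible for i ∈ {a,b}; for n ≥ n₀ let ψ̄^n be the Lyapunov–Schmidt reduction of ψ with respect to the splitting H = H_n ⊕ H_n^⊥, defined on I × B for a ball B ⊂ H_n around 0, and let l^n_i denote the Hessian of ψ̄^n_i at 0 for i ∈ {a,b}. Then for all sufficiently large n and i ∈ {a,b}, 0 is a non-degenerate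 critical point of ψ̄^n_i (i.e., l^n_i is invertible) and μ(l^n_i) = μ(L^n_i). -/
/-!
Write `L = J + K` in block form for `H = Hₙ ⊕ Hₙᗮ`. Since `J` is the reflection in `H⁺` and
preserves `Hₙ`, the off-diagonal blocks and the defect of the `Hₙᗮ`-block from the isometry
`J|Hₙᗮ` only involve `Pₙᗮ K` and `K Pₙᗮ`. These have the same norm because `K` is self-adjoint,
and the norm tends to `0` because `K` is compact and `Pₙᗮ → 0` strongly. Differentiating the
equation `Pₙᗮ ∇ψ(x + gₙ(x)) = 0` at `0` gives `lⁿ = Lⁿ + B G` with `D G = -C`, where `B`, `C`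
are `O(ε)` and `D` is bounded below by `1 - ε`; so `‖lⁿ - Lⁿ‖ = O(ε²)`, while `Lⁿ` is bounded
below by `c - ε` if `c` bounds the invertible `L` from below. Finally, the eigenvectors of a
symmetric operator bounded below by `c` span subspaces on which its quadratic form is
`≤ -c‖x‖²` and `≥ c‖x‖²`; a perturbation of norm `< c` keeps both signs, hence it is invertible
and has the same Morse index.
-/

open Set Metric

/-- The Morse index of a self-adjoint operator: the maximal dimension of a subspace on which
the associated quadratic form is negative definite. -/
noncomputable def morseIndex {E : Type*} [NormedAddCommGroup E] [InnerProductSpace ℝ E]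
    (T : E →L[ℝ] E) : ℕ :=
  sSup {k : ℕ | ∃ W : Submodule ℝ E, Module.finrank ℝ W = k ∧
    ∀ x ∈ W, x ≠ 0 → (inner ℝ (T x) x : ℝ) < 0}

section MorseIndex

variable {E : Type*} [NormedAddCommGroup E] [InnerProductSpace ℝ E]

theorem OrthonormalBasis.mul_norm_sq_le_inner_of_mem_span {ι : Type*} [Fintype ι]
    (b : OrthonormalBasis ι ℝ E) {T : E →ₗ[ℝ] E} (hT : T.IsSymmetric) {μ : ι → ℝ}
    (hb : ∀ i, T (b i) = μ i • b i) {s : Set ι} {c : ℝ} (hs : ∀ i ∈ s, c ≤ μ i) {x : E}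
    (hx : x ∈ Submodule.span ℝ (b '' s)) :
    c * ‖x‖ ^ 2 ≤ inner ℝ (T x) x := by
  have hcoord : ∀ i ∉ s, inner ℝ (b i) x = 0 := fun i hi => by
    refine (Submodule.mem_orthogonal_singleton_iff_inner_right).1 ?_
    refine Submodule.span_le.2 ?_ hx
    rintro _ ⟨j, hj, rfl⟩
    exact Submodule.mem_orthogonal_singleton_iff_inner_right.2
      (b.orthonormal.2 fun h => hi (h ▸ hj))
  have hTx : inner ℝ (T x) x = ∑ i, μ i * inner ℝ (b i) x ^ 2 := by
    rw [← b.sum_inner_mul_inner]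
    refine Finset.sum_congr rfl fun i _ => ?_
    rw [hT, hb, real_inner_smul_right, real_inner_comm x]
    ring
  have hx2 : ‖x‖ ^ 2 = ∑ i, inner ℝ (b i) x ^ 2 := by
    rw [← real_inner_self_eq_norm_sq, ← b.sum_inner_mul_inner]
    simp only [real_inner_comm x, sq]
  rw [hTx, hx2, Finset.mul_sum]
  refine Finset.sum_le_sum fun i _ => ?_
  by_cases hi : i ∈ s
  · exact mul_le_mul_of_nonneg_right (hs i hi) (sq_nonneg _)
  · simp [hcoord i hi]

theorem abs_inner_sub_inner_le {S T : E →L[ℝ] E} {d : ℝ} (hST : ∀ x, ‖T x - S x‖ ≤ d * ‖x‖)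
    (x : E) : |inner ℝ (T x) x - inner ℝ (S x) x| ≤ d * ‖x‖ ^ 2 := by
  rw [← inner_sub_left]
  calc |inner ℝ (T x - S x) x| ≤ ‖T x - S x‖ * ‖x‖ := abs_real_inner_le_norm _ _
    _ ≤ d * ‖x‖ * ‖x‖ := mul_le_mul_of_nonneg_right (hST x) (norm_nonneg x)
    _ = d * ‖x‖ ^ 2 := by ring

variable [FiniteDimensional ℝ E]

theorem morseIndex_eq_finrank {S : E →L[ℝ] E} {Wn Wp : Submodule ℝ E}
    (hWn : ∀ x ∈ Wn, x ≠ 0 → inner ℝ (S x) x < 0) (hWp : ∀ x ∈ Wp, 0 ≤ inner ℝ (S x) x)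
    (hsup : Wn ⊔ Wp = ⊤) :
    morseIndex S = Module.finrank ℝ Wn := by
  refine IsGreatest.csSup_eq ⟨⟨Wn, rfl, hWn⟩, ?_⟩
  rintro _ ⟨W, rfl, hW⟩
  have hdisj : W ⊓ Wp = ⊥ := (Submodule.eq_bot_iff _).2 fun x hx => by
    by_contra hx0
    exact (hW x hx.1 hx0).not_ge (hWp x hx.2)
  have h₁ := Submodule.finrank_sup_add_finrank_inf_eq W Wp
  have h₂ := Submodule.finrank_add_le_finrank_add_finrank Wn Wp
  rw [hdisj, finrank_bot, add_zero] at h₁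
  rw [hsup, finrank_top] at h₂
  have := Submodule.finrank_le (W ⊔ Wp)
  omega

theorem bijective_and_morseIndex_eq_of_norm_sub_le {S S' : E →L[ℝ] E}
    (hS : (S : E →ₗ[ℝ] E).IsSymmetric) {c d : ℝ} (hSc : ∀ x, c * ‖x‖ ≤ ‖S x‖) (hd : 0 ≤ d)
    (hdc : d < c) (hS' : ∀ x, ‖S' x - S x‖ ≤ d * ‖x‖) :
    Function.Bijective S' ∧ morseIndex S' = morseIndex S := by
  set b := hS.eigenvectorBasis rfl
  set μ := hS.eigenvalues rfl
  have hb : ∀ i, S (b i) = μ i • b i := hS.apply_eigenvectorBasis rfl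
  have hμ : ∀ i, c ≤ |μ i| := fun i => by
    simpa [hb, norm_smul, b.orthonormal.1 i] using hSc (b i)
  set s := {i | μ i < 0}
  have hneg : ∀ x ∈ Submodule.span ℝ (b '' s), c * ‖x‖ ^ 2 ≤ -inner ℝ (S x) x := by
    intro x hx
    have hnegS : (-(S : E →ₗ[ℝ] E)).IsSymmetric := fun x y => by
      simp only [LinearMap.neg_apply, inner_neg_left, inner_neg_right, hS x y]
    simpa using b.mul_norm_sq_le_inner_of_mem_span hnegS (μ := -μ) (fun i => by simp [hb])
      (fun i (hi : μ i < 0) => by simpa [abs_of_neg hi] using hμ i) hx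
  have hpos : ∀ x ∈ Submodule.span ℝ (b '' sᶜ), c * ‖x‖ ^ 2 ≤ inner ℝ (S x) x :=
    fun x hx => b.mul_norm_sq_le_inner_of_mem_span hS hb
      (fun i (hi : ¬ μ i < 0) => by simpa [abs_of_nonneg (not_lt.1 hi)] using hμ i) hx
  have hsup : Submodule.span ℝ (b '' s) ⊔ Submodule.span ℝ (b '' sᶜ) = ⊤ := by
    rw [← Submodule.span_union, ← image_union, union_compl_self, image_univ]
    exact b.toBasis.span_eq
  have hindex : ∀ T : E →L[ℝ] E, (∀ x, ‖T x - S x‖ ≤ d * ‖x‖) →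
      morseIndex T = Module.finrank ℝ (Submodule.span ℝ (b '' s)) := by
    intro T hT
    refine morseIndex_eq_finrank (fun x hx hx0 => ?_) (fun x hx => ?_) hsup
    · have hx2 : 0 < ‖x‖ ^ 2 := by positivity
      nlinarith [abs_le.1 (abs_inner_sub_inner_le hT x), hneg x hx]
    · nlinarith [abs_le.1 (abs_inner_sub_inner_le hT x), hpos x hx, sq_nonneg ‖x‖]
  have hinj : Function.Injective S' := by
    refine (injective_iff_map_eq_zero S').2 fun x hx => ?_
    have h₁ := hS' x
    rw [hx, zero_sub, norm_neg] at h₁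
    have h₂ := hSc x
    exact norm_le_zero_iff.1 (by nlinarith [norm_nonneg x])
  refine ⟨⟨hinj, LinearMap.injective_iff_surjective (f := (S' : E →ₗ[ℝ] E)).1 hinj⟩, ?_⟩
  rw [hindex S' hS', hindex S fun x => by simp [mul_nonneg hd]]

end MorseIndex

open Filter Topology

section Compact

variable {ι F G : Type*} [NormedAddCommGroup F] [NormedSpace ℝ F] [NormedAddCommGroup G]
  [NormedSpace ℝ G] {l : Filter ι} {R : ι → F →L[ℝ] G}

theorem IsCompact.eventually_forall_norm_apply_le {C : Set F} (hC : IsCompact C)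
    (hR : ∀ i, ‖R i‖ ≤ 1) (hlim : ∀ x, Tendsto (fun i => R i x) l (𝓝 0)) {ε : ℝ}
    (hε : 0 < ε) : ∀ᶠ i in l, ∀ z ∈ C, ‖R i z‖ ≤ ε := by
  obtain ⟨t, -, ht, hCt⟩ := hC.finite_cover_balls (half_pos hε)
  have hnet : ∀ᶠ i in l, ∀ y ∈ t, ‖R i y‖ < ε / 2 := (ht.eventually_all).2 fun y _ =>
    (hlim y).norm.eventually (gt_mem_nhds (by simpa using half_pos hε))
  filter_upwards [hnet] with i hi z hz
  obtain ⟨y, hy, hzy⟩ := mem_iUnion₂.1 (hCt hz)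
  rw [mem_ball, dist_eq_norm] at hzy
  calc ‖R i z‖ = ‖R i (z - y) + R i y‖ := by rw [map_sub, sub_add_cancel]
    _ ≤ ‖R i (z - y)‖ + ‖R i y‖ := norm_add_le _ _
    _ ≤ ‖z - y‖ + ‖R i y‖ := by
        gcongr; exact (R i).le_of_opNorm_le (hR i) _ |>.trans_eq (one_mul _)
    _ ≤ ε := by linarith [hi y hy]

variable {E : Type*} [NormedAddCommGroup E] [NormedSpace ℝ E]

theorem IsCompactOperator.tendsto_norm_comp {T : E →L[ℝ] F} (hT : IsCompactOperator T)
    (hR : ∀ i, ‖R i‖ ≤ 1) (hlim : ∀ x, Tendsto (fun i => R i x) l (𝓝 0)) :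
    Tendsto (fun i => ‖R i ∘L T‖) l (𝓝 0) := by
  refine tendsto_order.2 ⟨fun a ha => Eventually.of_forall fun i => ha.trans_le (norm_nonneg _),
    fun a ha => ?_⟩
  have hC := hT.isCompact_closure_image_closedBall 1
  filter_upwards [hC.eventually_forall_norm_apply_le hR hlim (half_pos ha)] with i hi
  refine lt_of_le_of_lt ?_ (half_lt_self ha)
  refine ContinuousLinearMap.opNorm_le_of_unit_norm (half_pos ha).le fun x hx => hi _ ?_
  exact subset_closure ⟨x, by simp [hx], rfl⟩

end Compact

theorem ContinuousLinearMap.exists_pos_mul_norm_le_of_bijective {E F : Type*}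
    [NormedAddCommGroup E] [NormedSpace ℝ E] [CompleteSpace E] [NormedAddCommGroup F]
    [NormedSpace ℝ F] [CompleteSpace F] {T : E →L[ℝ] F} (hT : Function.Bijective T) :
    ∃ c > 0, ∀ z, c * ‖z‖ ≤ ‖T z‖ := by
  obtain ⟨C, hC, hpre⟩ := T.exists_preimage_norm_le hT.2
  refine ⟨C⁻¹, inv_pos.2 hC, fun z => ?_⟩
  obtain ⟨x, hxz, hx⟩ := hpre (T z)
  rw [inv_mul_le_iff₀ hC, ← hT.1 hxz]
  exact hxz ▸ hx

section Projection

variable {H : Type*} [NormedAddCommGroup H] [InnerProductSpace ℝ H]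

theorem tendsto_starProjection_orthogonal_apply {U : ℕ → Submodule ℝ H}
    [∀ n, (U n).HasOrthogonalProjection] (hU : Monotone U)
    (hdense : ⊤ ≤ (⨆ n, U n).topologicalClosure) (x : H) :
    Tendsto (fun n => (U n)ᗮ.starProjection x) atTop (𝓝 0) := by
  simpa [Submodule.starProjection_orthogonal] using
    (tendsto_const_nhds (x := x)).sub (Submodule.starProjection_tendsto_self U hU x hdense)

theorem IsSelfAdjoint.norm_apply_le_of_mem_orthogonal [CompleteSpace H] {K : H →L[ℝ] H}
    (hK : IsSelfAdjoint K) (E : Submodule ℝ H) [E.HasOrthogonalProjection] {y : H}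
    (hy : y ∈ Eᗮ) : ‖K y‖ ≤ ‖Eᗮ.starProjection ∘L K‖ * ‖y‖ := by
  have hstar : star (Eᗮ.starProjection ∘L K) = K ∘L Eᗮ.starProjection := by
    rw [ContinuousLinearMap.star_eq_adjoint, ContinuousLinearMap.adjoint_comp,
      ← ContinuousLinearMap.star_eq_adjoint, ← ContinuousLinearMap.star_eq_adjoint, hK.star_eq,
      (isSelfAdjoint_starProjection _).star_eq]
  calc ‖K y‖ = ‖(K ∘L Eᗮ.starProjection) y‖ := by
        rw [ContinuousLinearMap.comp_apply, Submodule.starProjection_eq_self_iff.2 hy]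
    _ ≤ ‖Eᗮ.starProjection ∘L K‖ * ‖y‖ := by
        rw [← hstar, ← norm_star (Eᗮ.starProjection ∘L K)]
        exact ContinuousLinearMap.le_opNorm _ _

end Projection

section BlockEstimates

open Submodule

variable {H : Type*} [NormedAddCommGroup H] [InnerProductSpace ℝ H] {E : Submodule ℝ H}
  [E.HasOrthogonalProjection] {J K : H →L[ℝ] H} {ε : ℝ}

theorem norm_orthogonalProjectionOnto_orthogonal_add_apply_le (hJE : ∀ x ∈ E, J x ∈ E)
    (hKε : ‖Eᗮ.starProjection ∘L K‖ ≤ ε) {x : H} (hx : x ∈ E) :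
    ‖Eᗮ.orthogonalProjectionOnto ((J + K) x)‖ ≤ ε * ‖x‖ := by
  rw [add_apply, map_add,
    orthogonalProjectionOnto_orthogonal_apply_eq_zero (hJE x hx), zero_add]
  calc ‖Eᗮ.orthogonalProjectionOnto (K x)‖ = ‖(Eᗮ.starProjection ∘L K) x‖ := rfl
    _ ≤ ε * ‖x‖ := (Eᗮ.starProjection ∘L K).le_of_opNorm_le hKε x

theorem mul_norm_le_norm_orthogonalProjectionOnto_add_apply (hJE : ∀ x ∈ E, J x ∈ E)
    (hKε : ‖Eᗮ.starProjection ∘L K‖ ≤ ε) {c : ℝ} (hc : ∀ z, c * ‖z‖ ≤ ‖(J + K) z‖) {x : H}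
    (hx : x ∈ E) : (c - ε) * ‖x‖ ≤ ‖E.orthogonalProjectionOnto ((J + K) x)‖ := by
  have hsplit : ‖(J + K) x‖ ≤ ‖E.orthogonalProjectionOnto ((J + K) x)‖ +
      ‖Eᗮ.orthogonalProjectionOnto ((J + K) x)‖ := by
    conv_lhs => rw [← E.starProjection_add_starProjection_orthogonal ((J + K) x)]
    exact norm_add_le _ _
  linarith [hc x, norm_orthogonalProjectionOnto_orthogonal_add_apply_le hJE hKε hx]

variable [CompleteSpace H]

theorem norm_orthogonalProjectionOnto_add_apply_le (hJ : IsSelfAdjoint J)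
    (hJE : ∀ x ∈ E, J x ∈ E) (hK : IsSelfAdjoint K) (hKε : ‖Eᗮ.starProjection ∘L K‖ ≤ ε)
    {y : H} (hy : y ∈ Eᗮ) : ‖E.orthogonalProjectionOnto ((J + K) y)‖ ≤ ε * ‖y‖ := by
  have hJy : J y ∈ Eᗮ := hJ.isSymmetric.orthogonalComplement_mem_invtSubmodule hJE hy
  rw [add_apply, map_add, orthogonalProjectionOnto_apply_of_mem_orthogonal hJy, zero_add]
  calc ‖E.orthogonalProjectionOnto (K y)‖ ≤ ‖K y‖ := norm_orthogonalProjectionOnto_apply_le _ _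
    _ ≤ ‖Eᗮ.starProjection ∘L K‖ * ‖y‖ := hK.norm_apply_le_of_mem_orthogonal E hy
    _ ≤ ε * ‖y‖ := by gcongr

theorem mul_norm_le_norm_orthogonalProjectionOnto_orthogonal_add_apply (hJ : IsSelfAdjoint J)
    (hJnorm : ∀ x, ‖J x‖ = ‖x‖) (hJE : ∀ x ∈ E, J x ∈ E) (hK : IsSelfAdjoint K)
    (hKε : ‖Eᗮ.starProjection ∘L K‖ ≤ ε) {y : H} (hy : y ∈ Eᗮ) :
    (1 - ε) * ‖y‖ ≤ ‖Eᗮ.orthogonalProjectionOnto ((J + K) y)‖ := by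
  have hJy : J y ∈ Eᗮ := hJ.isSymmetric.orthogonalComplement_mem_invtSubmodule hJE hy
  have hQJy : ‖Eᗮ.orthogonalProjectionOnto (J y)‖ = ‖y‖ := by
    rw [norm_orthogonalProjectionOnto_apply _ hJy, hJnorm]
  have hKy : ‖Eᗮ.orthogonalProjectionOnto (K y)‖ ≤ ε * ‖y‖ :=
    (norm_orthogonalProjectionOnto_apply_le _ _).trans
      ((hK.norm_apply_le_of_mem_orthogonal E hy).trans (by gcongr))
  have htri := norm_sub_le (Eᗮ.orthogonalProjectionOnto ((J + K) y))
    (Eᗮ.orthogonalProjectionOnto (K y))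
  rw [add_apply, map_add, add_sub_cancel_right] at htri
  rw [add_apply, map_add]
  linarith

theorem norm_orthogonalProjectionOnto_add_apply_add_sub_le (hJ : IsSelfAdjoint J)
    (hJnorm : ∀ x, ‖J x‖ = ‖x‖) (hJE : ∀ x ∈ E, J x ∈ E) (hK : IsSelfAdjoint K)
    (hKε : ‖Eᗮ.starProjection ∘L K‖ ≤ ε) (hε0 : 0 ≤ ε) (hε : ε ≤ 1 / 2) {x y : H} (hx : x ∈ E)
    (hy : y ∈ Eᗮ) (hxy : Eᗮ.orthogonalProjectionOnto ((J + K) (x + y)) = 0) :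
    ‖E.orthogonalProjectionOnto ((J + K) (x + y)) - E.orthogonalProjectionOnto ((J + K) x)‖ ≤
      2 * ε ^ 2 * ‖x‖ := by
  rw [map_add, map_add] at hxy ⊢
  rw [add_sub_cancel_left]
  have hQ : ‖Eᗮ.orthogonalProjectionOnto ((J + K) y)‖ = ‖Eᗮ.orthogonalProjectionOnto ((J + K) x)‖ :=
    by rw [eq_neg_of_add_eq_zero_right hxy, norm_neg]
  have hy2 : ‖y‖ ≤ 2 * ε * ‖x‖ := by
    have hD := mul_norm_le_norm_orthogonalProjectionOnto_orthogonal_add_apply hJ hJnorm hJE hK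
      hKε hy
    have hC := norm_orthogonalProjectionOnto_orthogonal_add_apply_le hJE hKε hx
    nlinarith [norm_nonneg y]
  calc ‖E.orthogonalProjectionOnto ((J + K) y)‖ ≤ ε * ‖y‖ :=
        norm_orthogonalProjectionOnto_add_apply_le hJ hJE hK hKε hy
    _ ≤ ε * (2 * ε * ‖x‖) := by gcongr
    _ = 2 * ε ^ 2 * ‖x‖ := by ring

end BlockEstimates

section Reduction

open Submodule

variable {H : Type*} [NormedAddCommGroup H] [InnerProductSpace ℝ H] {E : Submodule ℝ H}
  {g : E → Eᗮ}

theorem hasFDerivAt_coe_add_coe {x : E} (hg : DifferentiableAt ℝ g x) :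
    HasFDerivAt (fun x' : E => (x' : H) + g x') (E.subtypeL + Eᗮ.subtypeL ∘L fderiv ℝ g x) x :=
  E.subtypeL.hasFDerivAt.add (Eᗮ.subtypeL.hasFDerivAt.comp x hg.hasFDerivAt)

variable [CompleteSpace H] [CompleteSpace E]

theorem hasGradientAt_comp_coe_add_coe {f : H → ℝ} {x : E} (hf : DifferentiableAt ℝ f (x + g x))
    (hg : DifferentiableAt ℝ g x)
    (hQ : Eᗮ.orthogonalProjectionOnto (gradient f (x + g x)) = 0) :
    HasGradientAt (fun x' : E => f (x' + g x')) (E.orthogonalProjectionOnto (gradient f (x + g x)))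
      x := by
  rw [hasGradientAt_iff_hasFDerivAt]
  refine (hf.hasGradientAt.hasFDerivAt.comp x (hasFDerivAt_coe_add_coe hg)).congr_fderiv ?_
  ext v
  have hperp : inner ℝ (gradient f (x + g x)) (fderiv ℝ g x v : H) = 0 := by
    rw [real_inner_comm, ← inner_orthogonalProjectionOnto_eq_of_mem_left, hQ, inner_zero_right]
  show inner ℝ (gradient f (x + g x)) ((v : H) + (fderiv ℝ g x v : H)) = _
  rw [inner_add_right, hperp, add_zero, InnerProductSpace.toDual_apply_apply,
    inner_orthogonalProjectionOnto_eq_of_mem_right]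

theorem fderiv_gradient_comp_coe_add_coe_zero {f : H → ℝ} {L : H →L[ℝ] H}
    (hL : HasFDerivAt (gradient f) L 0) (hg0 : g 0 = 0)
    (hred : ∀ᶠ x in 𝓝 (0 : E), DifferentiableAt ℝ f (x + g x) ∧ DifferentiableAt ℝ g x ∧
      Eᗮ.orthogonalProjectionOnto (gradient f (x + g x)) = 0) :
    fderiv ℝ (fun x : E => gradient (fun x' : E => f (x' + g x')) x) 0 =
        E.orthogonalProjectionOnto ∘L L ∘L (E.subtypeL + Eᗮ.subtypeL ∘L fderiv ℝ g 0) ∧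
      Eᗮ.orthogonalProjectionOnto ∘L L ∘L (E.subtypeL + Eᗮ.subtypeL ∘L fderiv ℝ g 0) = 0 := by
  have hL' : HasFDerivAt (gradient f) L ((0 : E) + g 0 : H) := by simpa [hg0] using hL
  have hgrad : HasFDerivAt (fun x : E => gradient f (x + g x))
      (L ∘L (E.subtypeL + Eᗮ.subtypeL ∘L fderiv ℝ g 0)) 0 :=
    HasFDerivAt.comp (g := gradient f) 0 hL' (hasFDerivAt_coe_add_coe hred.self_of_nhds.2.1)
  constructor
  · have hred' : (fun x : E => gradient (fun x' : E => f (x' + g x')) x) =ᶠ[𝓝 0]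
        fun x => E.orthogonalProjectionOnto (gradient f (x + g x)) :=
      hred.mono fun x hx => (hasGradientAt_comp_coe_add_coe hx.1 hx.2.1 hx.2.2).gradient
    rw [hred'.fderiv_eq]
    exact (E.orthogonalProjectionOnto.hasFDerivAt.comp 0 hgrad).fderiv
  · have hQ : (fun x : E => Eᗮ.orthogonalProjectionOnto (gradient f (x + g x))) =ᶠ[𝓝 0]
        fun _ => 0 := hred.mono fun x hx => hx.2.2
    exact (Eᗮ.orthogonalProjectionOnto.hasFDerivAt.comp 0 hgrad).unique
      ((hasFDerivAt_const 0 0).congr_of_eventuallyEq hQ)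

end Reduction

theorem bijective_and_morseIndex_eq_of_lyapunovSchmidt {H : Type*} [NormedAddCommGroup H]
    [InnerProductSpace ℝ H] [CompleteSpace H] {E : Submodule ℝ H} [FiniteDimensional ℝ E]
    {J K : H →L[ℝ] H} (hJ : IsSelfAdjoint J) (hJnorm : ∀ x, ‖J x‖ = ‖x‖)
    (hJE : ∀ x ∈ E, J x ∈ E) (hK : IsSelfAdjoint K) {c ε : ℝ}
    (hc : ∀ z, c * ‖z‖ ≤ ‖(J + K) z‖) (hε0 : 0 < ε) (hεc : ε ≤ c / 4) (hε : ε ≤ 1 / 2)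
    (hKε : ‖Eᗮ.starProjection ∘L K‖ ≤ ε) {f : H → ℝ} (hf : HasFDerivAt (gradient f) (J + K) 0)
    {U : Set H} (hU : IsOpen U) (hfU : DifferentiableOn ℝ f U) {δ : ℝ} (hδ : 0 < δ)
    {g : E → Eᗮ} (hg0 : g 0 = 0) (hg : DifferentiableOn ℝ g (ball 0 δ))
    (hsol : ∀ x ∈ ball (0 : E) δ,
      (x : H) + g x ∈ U ∧ Eᗮ.orthogonalProjectionOnto (gradient f (x + g x)) = 0) :
    Function.Bijective (fderiv ℝ (fun x : E => gradient (fun x' : E => f (x' + g x')) x) 0) ∧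
      morseIndex (fderiv ℝ (fun x : E => gradient (fun x' : E => f (x' + g x')) x) 0) =
        morseIndex (E.orthogonalProjectionOnto ∘L (J + K) ∘L E.subtypeL) := by
  have hred : ∀ᶠ x in 𝓝 (0 : E), DifferentiableAt ℝ f (x + g x) ∧ DifferentiableAt ℝ g x ∧
      Eᗮ.orthogonalProjectionOnto (gradient f (x + g x)) = 0 := by
    filter_upwards [ball_mem_nhds (0 : E) hδ] with x hx
    exact ⟨hfU.differentiableAt (hU.mem_nhds (hsol x hx).1),
      hg.differentiableAt (isOpen_ball.mem_nhds hx), (hsol x hx).2⟩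
  obtain ⟨hl, hQ⟩ := fderiv_gradient_comp_coe_add_coe_zero hf hg0 hred
  have hA : ((E.orthogonalProjectionOnto ∘L (J + K) ∘L E.subtypeL : E →L[ℝ] E) :
      E →ₗ[ℝ] E).IsSymmetric := by
    simpa [Submodule.adjoint_subtypeL] using ((hJ.add hK).adjoint_conj E.subtypeL).isSymmetric
  refine bijective_and_morseIndex_eq_of_norm_sub_le (d := 2 * ε ^ 2) hA
    (fun x => mul_norm_le_norm_orthogonalProjectionOnto_add_apply hJE hKε hc x.2)
    (by positivity) (by nlinarith) fun x => ?_
  rw [hl]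
  exact norm_orthogonalProjectionOnto_add_apply_add_sub_le hJ hJnorm hJE hK hKε hε0.le hε x.2
    (fderiv ℝ g 0 x).2 (congrArg (fun T => T x) hQ)

section Polarization

open Submodule

variable {H : Type*} [NormedAddCommGroup H] [InnerProductSpace ℝ H] {V : Submodule ℝ H}

theorem Submodule.isSelfAdjoint_reflection [CompleteSpace H] [V.HasOrthogonalProjection] :
    IsSelfAdjoint (V.reflection.toContinuousLinearEquiv : H →L[ℝ] H) :=
  ContinuousLinearMap.isSelfAdjoint_iff_isSymmetric.2 fun x y => by
    change inner ℝ (V.reflection x) y = inner ℝ x (V.reflection y)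
    rw [← V.reflection.inner_map_map x (V.reflection y), reflection_reflection]

theorem apply_eq_reflection_of_eq_of_eq_neg [V.HasOrthogonalProjection] {J : H →L[ℝ] H}
    (hJp : ∀ x ∈ V, J x = x) (hJm : ∀ x ∈ Vᗮ, J x = -x) (x : H) : J x = V.reflection x := by
  conv_lhs => rw [← V.starProjection_add_starProjection_orthogonal x]
  rw [map_add, hJp _ (V.starProjection_apply_mem x), hJm _ (Vᗮ.starProjection_apply_mem x),
    reflection_apply, starProjection_orthogonal, two_smul]
  simp only [sub_apply, ContinuousLinearMap.id_apply]
  abel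

theorem apply_mem_span_union_of_eq_of_eq_neg {J : H →L[ℝ] H} (hJp : ∀ x ∈ V, J x = x)
    (hJm : ∀ x ∈ Vᗮ, J x = -x) {s t : Set H} (hs : s ⊆ V) (ht : t ⊆ Vᗮ) {x : H}
    (hx : x ∈ span ℝ (s ∪ t)) : J x ∈ span ℝ (s ∪ t) := by
  refine (span_le (p := (span ℝ (s ∪ t)).comap (J : H →ₗ[ℝ] H))).2 ?_ hx
  rintro y (hy | hy) <;> change J y ∈ span ℝ (s ∪ t)
  · rw [hJp y (hs hy)]
    exact subset_span (Or.inl hy)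
  · rw [hJm y (ht hy)]
    exact neg_mem (subset_span (Or.inr hy))

theorem top_le_topologicalClosure_of_subset [V.HasOrthogonalProjection] {W : Submodule ℝ H}
    {s t : Set H} (hs : (span ℝ s).topologicalClosure = V) (ht : (span ℝ t).topologicalClosure = Vᗮ)
    (hsW : s ⊆ W) (htW : t ⊆ W) : ⊤ ≤ W.topologicalClosure := by
  rw [← V.sup_orthogonal_of_hasOrthogonalProjection]
  nth_rw 1 [← hs]
  rw [← ht]
  exact sup_le (topologicalClosure_mono (span_le.2 hsW)) (topologicalClosure_mono (span_le.2 htW))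

theorem tendsto_starProjection_orthogonal_span_image_lt [V.HasOrthogonalProjection] {ep em : ℕ → H}
    (hepdense : (span ℝ (range ep)).topologicalClosure = V)
    (hemdense : (span ℝ (range em)).topologicalClosure = Vᗮ) {Hn : ℕ → Submodule ℝ H}
    [∀ n, (Hn n).HasOrthogonalProjection]
    (hHn : ∀ n, Hn n = span ℝ (ep '' {k | k < n} ∪ em '' {k | k < n})) (x : H) :
    Tendsto (fun n => (Hn n)ᗮ.starProjection x) atTop (𝓝 0) := by
  have hmono : Monotone Hn := fun m n hmn => by
    rw [hHn, hHn]
    exact span_mono (union_subset_union (image_mono fun k hk => lt_of_lt_of_le hk hmn)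
      (image_mono fun k hk => lt_of_lt_of_le hk hmn))
  have hmem : ∀ k, ep k ∈ ⨆ n, Hn n ∧ em k ∈ ⨆ n, Hn n := fun k => by
    refine ⟨mem_iSup_of_mem (k + 1) ?_, mem_iSup_of_mem (k + 1) ?_⟩ <;> rw [hHn] <;>
      apply subset_span
    exacts [Or.inl ⟨k, k.lt_succ_self, rfl⟩, Or.inr ⟨k, k.lt_succ_self, rfl⟩]
  refine tendsto_starProjection_orthogonal_apply hmono ?_ x
  exact top_le_topologicalClosure_of_subset hepdense hemdense
    (range_subset_iff.2 fun k => (hmem k).1) (range_subset_iff.2 fun k => (hmem k).2)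

end Polarization

theorem morse_index_of_reduction_general
    {H : Type*} [NormedAddCommGroup H] [InnerProductSpace ℝ H] [CompleteSpace H]
    -- the polarization `H = H⁺ ⊕ H⁻`, both factors infinite-dimensional:
    (V : Submodule ℝ H) (hVclosed : IsClosed (V : Set H))
    -- orthonormal bases `{e_k^+}` of `H⁺` and `{e_k^-}` of `H⁻`:
    (ep em : ℕ → H)
    (hepV : ∀ k, ep k ∈ V) (hemV : ∀ k, em k ∈ Vᗮ)
    (hepdense : (Submodule.span ℝ (Set.range ep)).topologicalClosure = V)
    (hemdense : (Submodule.span ℝ (Set.range em)).topologicalClosure = Vᗮ)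
    -- `J` is the self-adjoint involution equal to `Id` on `H⁺` and `−Id` on `H⁻`:
    (J : H →L[ℝ] H) (hJp : ∀ x ∈ V, J x = x) (hJm : ∀ x ∈ Vᗮ, J x = -x)
    -- `H_n` is the span of `{e_k^± : k < n}`:
    (Hn : ℕ → Submodule ℝ H)
    (hHn : ∀ n, Hn n = Submodule.span ℝ (ep '' {k | k < n} ∪ em '' {k | k < n}))
    [∀ n, FiniteDimensional ℝ (Hn n)]
    -- the family `ψ`, a continuous family of `C²` functionals on `I × U`:
    (U : Set H) (hUopen : IsOpen U)
    (a b : ℝ) (hab : a ≤ b)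
    (ψ : ℝ → H → ℝ)
    (hψC2 : ∀ l ∈ Icc a b, ContDiffOn ℝ 2 (ψ l) U)
    -- the Hessians at `0` are `L_λ = J + K_λ` with `K_λ` compact self-adjoint:
    (K : ℝ → H →L[ℝ] H)
    (hKcompact : ∀ l ∈ Icc a b, IsCompactOperator (K l))
    (hKsa : ∀ l ∈ Icc a b, IsSelfAdjoint (K l))
    (hHess : ∀ l ∈ Icc a b, HasFDerivAt (fun x => gradient (ψ l) x) (J + K l) 0)
    -- `L_a` and `L_b` are invertible:
    (hLa : Function.Bijective (J + K a)) (hLb : Function.Bijective (J + K b))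
    -- choice of `n₀`:
    (n₀ : ℕ)
    -- the Lyapunov–Schmidt reduction `ψ̄ⁿ(λ,x) = ψ(λ, x + gₙ(λ,x))` of `ψ` with respect
    -- to the splitting `H = H_n ⊕ H_nᗮ`, defined on `I × B(0,δ n)`:
    (δ : ℕ → ℝ) (hδ : ∀ n, n₀ ≤ n → 0 < δ n)
    (g : (n : ℕ) → ℝ → Hn n → ((Hn n)ᗮ : Submodule ℝ H))
    (hg0 : ∀ n, n₀ ≤ n → ∀ l ∈ Icc a b, g n l 0 = 0)
    (hgsol : ∀ n, n₀ ≤ n → ∀ l ∈ Icc a b, ∀ x ∈ ball (0 : Hn n) (δ n),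
      ((x : H) + (g n l x : H)) ∈ U ∧
      Submodule.orthogonalProjectionOnto (Hn n)ᗮ (gradient (ψ l) ((x : H) + (g n l x : H))) = 0)
    (hgC1 : ∀ n, n₀ ≤ n → ∀ l ∈ Icc a b, ContDiffOn ℝ 1 (g n l) (ball 0 (δ n))) :
    -- conclusion: for sufficiently large `n`, `0` is a non-degenerate critical point of
    -- `ψ̄ⁿ_i` and `μ(lⁿ_i) = μ(Lⁿ_i)`, `i ∈ {a, b}`:
    ∃ N : ℕ, n₀ ≤ N ∧ ∀ n, N ≤ n → ∀ i ∈ ({a, b} : Set ℝ),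
      Function.Bijective
        (fderiv ℝ (fun x : Hn n =>
          gradient (fun x' : Hn n => ψ i ((x' : H) + (g n i x' : H))) x) 0) ∧
      morseIndex
        (fderiv ℝ (fun x : Hn n =>
          gradient (fun x' : Hn n => ψ i ((x' : H) + (g n i x' : H))) x) 0)
      = morseIndex
        ((Submodule.orthogonalProjectionOnto (Hn n)).comp ((J + K i).comp (Hn n).subtypeL)) := by
  have : CompleteSpace V := hVclosed.completeSpace_coe
  have hJR : J = (V.reflection.toContinuousLinearEquiv : H →L[ℝ] H) :=
    ContinuousLinearMap.ext (apply_eq_reflection_of_eq_of_eq_neg hJp hJm)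
  have hJ : IsSelfAdjoint J := hJR ▸ V.isSelfAdjoint_reflection
  have hJnorm : ∀ x, ‖J x‖ = ‖x‖ := fun x => by rw [hJR]; exact V.reflection.norm_map x
  have hJHn : ∀ n, ∀ x ∈ Hn n, J x ∈ Hn n := fun n x hx => by
    rw [hHn n] at hx ⊢
    exact apply_mem_span_union_of_eq_of_eq_neg hJp hJm (by rintro _ ⟨k, -, rfl⟩; exact hepV k)
      (by rintro _ ⟨k, -, rfl⟩; exact hemV k) hx
  have hPn := tendsto_starProjection_orthogonal_span_image_lt hepdense hemdense hHn
  refine (eventually_atTop.1 ((eventually_ge_atTop n₀).and ?_)).imp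
    fun N hN => ⟨(hN N le_rfl).1, fun n hn => (hN n hn).2⟩
  refine (toFinite {a, b}).eventually_all.2 fun i hi => ?_
  have hiI : i ∈ Icc a b := by rcases hi with rfl | rfl <;> simp [hab]
  obtain ⟨c, hc, hLc⟩ := ContinuousLinearMap.exists_pos_mul_norm_le_of_bijective
    (by rcases hi with rfl | rfl; exacts [hLa, hLb])
  have hε : 0 < min (c / 4) (1 / 2) := by positivity
  have hKn := (hKcompact i hiI).tendsto_norm_comp
    (fun n => Submodule.starProjection_norm_le (Hn n)ᗮ) hPn
  filter_upwards [hKn.eventually (eventually_le_nhds hε), eventually_ge_atTop n₀] with n hKε hn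
  exact bijective_and_morseIndex_eq_of_lyapunovSchmidt hJ hJnorm (hJHn n) (hKsa i hiI) hLc hε
    (min_le_left _ _) (min_le_right _ _) hKε (hHess i hiI) hUopen
    ((hψC2 i hiI).differentiableOn two_ne_zero) (hδ n hn) (hg0 n hn i hiI)
    ((hgC1 n hn i hiI).differentiableOn one_ne_zero) (hgsol n hn i hiI)

/-- **Morse indices of the finite-dimensional reductions.**
Let `H = H⁺ ⊕ H⁻` (here `H⁺ = V`, `H⁻ = Vᗮ`, both infinite-dimensional), `J = Id ⊕ (−Id)`,
`{e_k^±}` orthonormal bases of `H^±`, `H_n` the span of the first `n` vectors of each basis,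
and `P_n` the orthogonal projection onto `H_n`.  Let `ψ` be a continuous family of `C²`
functionals with `∇ψ_λ(0) = 0` and Hessians `L_λ = J + K_λ` at `0`, `K_λ` compact
self-adjoint, `L_a, L_b` invertible.  Suppose that for `n ≥ n₀` the operator
`(Id − P_n)L_λ|_{H_nᗮ}` is invertible for all `λ ∈ [a,b]`, the operators
`L^n_i = P_n L_i|_{H_n}` are invertible for `i ∈ {a,b}`, and let `ψ̄ⁿ` be the
Lyapunov–Schmidt reduction of `ψ` with respect to `H = H_n ⊕ H_nᗮ`, with Hessian `lⁿ_i`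
of `ψ̄ⁿ_i` at `0`.  Then for all sufficiently large `n` and `i ∈ {a,b}`, `0` is a
non-degenerate critical point of `ψ̄ⁿ_i` (i.e. `lⁿ_i` is invertible) and
`μ(lⁿ_i) = μ(Lⁿ_i)`. -/
theorem morse_index_of_reduction
    {H : Type*} [NormedAddCommGroup H] [InnerProductSpace ℝ H] [CompleteSpace H]
    [TopologicalSpace.SeparableSpace H]
    -- the polarization `H = H⁺ ⊕ H⁻`, both factors infinite-dimensional:
    (V : Submodule ℝ H) (hVclosed : IsClosed (V : Set H))
    (hVinf : ¬ FiniteDimensional ℝ V) (hVcinf : ¬ FiniteDimensional ℝ Vᗮ)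
    -- orthonormal bases `{e_k^+}` of `H⁺` and `{e_k^-}` of `H⁻`:
    (ep em : ℕ → H)
    (hep : Orthonormal ℝ ep) (hem : Orthonormal ℝ em)
    (hepV : ∀ k, ep k ∈ V) (hemV : ∀ k, em k ∈ Vᗮ)
    (hepdense : (Submodule.span ℝ (Set.range ep)).topologicalClosure = V)
    (hemdense : (Submodule.span ℝ (Set.range em)).topologicalClosure = Vᗮ)
    -- `J` is the self-adjoint involution equal to `Id` on `H⁺` and `−Id` on `H⁻`:
    (J : H →L[ℝ] H) (hJp : ∀ x ∈ V, J x = x) (hJm : ∀ x ∈ Vᗮ, J x = -x)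
    -- `H_n` is the span of `{e_k^± : k < n}`:
    (Hn : ℕ → Submodule ℝ H)
    (hHn : ∀ n, Hn n = Submodule.span ℝ (ep '' {k | k < n} ∪ em '' {k | k < n}))
    [∀ n, FiniteDimensional ℝ (Hn n)]
    -- the family `ψ`, a continuous family of `C²` functionals on `I × U`:
    (U : Set H) (hUopen : IsOpen U) (hU0 : (0 : H) ∈ U)
    (a b : ℝ) (hab : a ≤ b)
    (ψ : ℝ → H → ℝ)
    (hψC2 : ∀ l ∈ Icc a b, ContDiffOn ℝ 2 (ψ l) U)
    (hψcont : ContinuousOn (fun p : ℝ × H => ψ p.1 p.2) (Icc a b ×ˢ U))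
    (hψd1 : ContinuousOn (fun p : ℝ × H => fderiv ℝ (ψ p.1) p.2) (Icc a b ×ˢ U))
    (hψd2 : ContinuousOn (fun p : ℝ × H => fderiv ℝ (fderiv ℝ (ψ p.1)) p.2) (Icc a b ×ˢ U))
    (hcrit : ∀ l ∈ Icc a b, gradient (ψ l) 0 = 0)
    -- the Hessians at `0` are `L_λ = J + K_λ` with `K_λ` compact self-adjoint:
    (K : ℝ → H →L[ℝ] H)
    (hKcompact : ∀ l ∈ Icc a b, IsCompactOperator (K l))
    (hKsa : ∀ l ∈ Icc a b, IsSelfAdjoint (K l))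
    (hKcont : ContinuousOn K (Icc a b))
    (hHess : ∀ l ∈ Icc a b, HasFDerivAt (fun x => gradient (ψ l) x) (J + K l) 0)
    -- `L_a` and `L_b` are invertible:
    (hLa : Function.Bijective (J + K a)) (hLb : Function.Bijective (J + K b))
    -- choice of `n₀`:
    (n₀ : ℕ)
    (hn₀inv : ∀ n, n₀ ≤ n → ∀ l ∈ Icc a b, Function.Bijective
      ((Submodule.orthogonalProjectionOnto (Hn n)ᗮ).comp ((J + K l).comp (Hn n)ᗮ.subtypeL)))
    (hn₀end : ∀ n, n₀ ≤ n → ∀ i ∈ ({a, b} : Set ℝ), Function.Bijective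
      ((Submodule.orthogonalProjectionOnto (Hn n)).comp ((J + K i).comp (Hn n).subtypeL)))
    -- the Lyapunov–Schmidt reduction `ψ̄ⁿ(λ,x) = ψ(λ, x + gₙ(λ,x))` of `ψ` with respect
    -- to the splitting `H = H_n ⊕ H_nᗮ`, defined on `I × B(0,δ n)`:
    (δ : ℕ → ℝ) (hδ : ∀ n, n₀ ≤ n → 0 < δ n)
    (g : (n : ℕ) → ℝ → Hn n → ((Hn n)ᗮ : Submodule ℝ H))
    (hgcont : ∀ n, n₀ ≤ n → ContinuousOn (fun p : ℝ × Hn n => g n p.1 p.2)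
      (Icc a b ×ˢ ball 0 (δ n)))
    (hg0 : ∀ n, n₀ ≤ n → ∀ l ∈ Icc a b, g n l 0 = 0)
    (hgsol : ∀ n, n₀ ≤ n → ∀ l ∈ Icc a b, ∀ x ∈ ball (0 : Hn n) (δ n),
      ((x : H) + (g n l x : H)) ∈ U ∧
      Submodule.orthogonalProjectionOnto (Hn n)ᗮ (gradient (ψ l) ((x : H) + (g n l x : H))) = 0)
    (hgC1 : ∀ n, n₀ ≤ n → ∀ l ∈ Icc a b, ContDiffOn ℝ 1 (g n l) (ball 0 (δ n))) :
    -- conclusion: for sufficiently large `n`, `0` is a non-degenerate critical point of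
    -- `ψ̄ⁿ_i` and `μ(lⁿ_i) = μ(Lⁿ_i)`, `i ∈ {a, b}`:
    ∃ N : ℕ, n₀ ≤ N ∧ ∀ n, N ≤ n → ∀ i ∈ ({a, b} : Set ℝ),
      Function.Bijective
        (fderiv ℝ (fun x : Hn n =>
          gradient (fun x' : Hn n => ψ i ((x' : H) + (g n i x' : H))) x) 0) ∧
      morseIndex
        (fderiv ℝ (fun x : Hn n =>
          gradient (fun x' : Hn n => ψ i ((x' : H) + (g n i x' : H))) x) 0)
      = morseIndex
        ((Submodule.orthogonalProjectionOnto (Hn n)).comp ((J + K i).comp (Hn n).subtypeL)) :=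
  morse_index_of_reduction_general V hVclosed ep em hepV hemV hepdense hemdense J hJp hJm Hn hHn U
    hUopen a b hab ψ hψC2 K hKcompact hKsa hHess hLa hLb n₀ δ hδ g hg0 hgsol hgC1
end
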